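/- arXiv:1901.03983 — 10 statements merged into one kernel-verified Lean document; each statement's English description precedes it below -/
import Mathlib

section
/- Let m ≥ 1 and 0 ≤ i ≤ m−1 be integers, and let c_i = Σ_{j=0}^{i} 2^j · C(m+1, j) · (−1)^{i−j} · C(m+i−j, i−j) be the integer coefficient of x^i in the power series ((1+2x)/(1+x))^{m+1}. If i + α(m) ≥ m, then 2^{i+α(m)−m} divides c_i. (Equivalently, the 2-adic valuation of c_i is at least i + α(m) − m whenever c_i ≠ 0.) -/
/-!
Every term of the sum is already divisible by `2 ^ (i + α(m) - m)`. Writing `t = i - j`, Kummer's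
theorem gives `v₂ (C(m+t, t)) = α(t) + α(m) - α(m+t)`, and since `n - α(n) = v₂(n!)` is monotone,
`α(m+t) ≤ α(2t) + (m - t) = α(t) + m - t` for `t ≤ m`. Hence the `j`-th term has valuation at least
`j + (t + α(m) - m) ≥ i + α(m) - m`.
-/

open Nat

lemma digits_two_sum_two_mul (n : ℕ) : (digits 2 (2 * n)).sum = (digits 2 n).sum := by
  rcases n.eq_zero_or_pos with rfl | hn
  · simp
  · rw [digits_base_mul one_lt_two hn, List.sum_cons, zero_add]

lemma digits_sum_le_digits_sum_add_sub {p M N : ℕ} [Fact p.Prime] (h : M ≤ N) :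
    (p.digits N).sum ≤ (p.digits M).sum + (N - M) := by
  have hval : padicValNat p M ! ≤ padicValNat p N ! :=
    (padicValNat_dvd_iff_le (factorial_ne_zero N)).mp
      (pow_padicValNat_dvd.trans (factorial_dvd_factorial h))
  have hmono : M - (p.digits M).sum ≤ N - (p.digits N).sum := by
    rw [← sub_one_mul_padicValNat_factorial, ← sub_one_mul_padicValNat_factorial]
    exact Nat.mul_le_mul_left _ hval
  have := digit_sum_le p M
  have := digit_sum_le p N
  omega

lemma digits_two_sum_add_add_le {m t : ℕ} (h : t ≤ m) :
    (digits 2 (m + t)).sum + t ≤ m + (digits 2 t).sum := by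
  have := digits_sum_le_digits_sum_add_sub (p := 2) (show 2 * t ≤ m + t by omega)
  rw [digits_two_sum_two_mul] at this
  omega

lemma two_pow_dvd_choose_add {m t : ℕ} (h : t ≤ m) :
    2 ^ (t + (digits 2 m).sum - m) ∣ (m + t).choose t := by
  have hkummer := sub_one_mul_padicValNat_choose_eq_sub_sum_digits' (p := 2) (k := t) (n := m)
  rw [show 2 - 1 = 1 from rfl, one_mul] at hkummer
  have := digits_two_sum_add_add_le h
  exact (pow_dvd_pow 2 (by omega)).trans pow_padicValNat_dvd

theorem stmt_0_general (m i : ℕ) (hi : i ≤ m - 1) :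
    (2 : ℤ) ^ (i + (Nat.digits 2 m).sum - m) ∣
      ∑ j ∈ Finset.range (i + 1),
        (2 : ℤ) ^ j * ((m + 1).choose j : ℤ) * (-1) ^ (i - j) *
          ((m + i - j).choose (i - j) : ℤ) := by
  refine Finset.dvd_sum fun j hj => ?_
  have hji : j ≤ i := Nat.lt_succ_iff.mp (Finset.mem_range.mp hj)
  set t := i - j
  rw [show m + i - j = m + t by omega]
  have hchoose : (2 : ℤ) ^ (t + (digits 2 m).sum - m) ∣ ((m + t).choose t : ℤ) := by
    exact_mod_cast two_pow_dvd_choose_add (show t ≤ m by omega)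
  calc (2 : ℤ) ^ (i + (digits 2 m).sum - m)
      ∣ 2 ^ j * 2 ^ (t + (digits 2 m).sum - m) := by
        rw [← pow_add]
        exact pow_dvd_pow 2 (by omega)
    _ ∣ 2 ^ j * ((m + 1).choose j : ℤ) * (-1) ^ (i - j) * ((m + t).choose t : ℤ) :=
        mul_dvd_mul ((dvd_mul_right _ _).trans (dvd_mul_right _ _)) hchoose

/-- Proposition 4.5: the 2-adic divisibility of the coefficient of `x^i` in
`((1+2x)/(1+x))^(m+1)`. Here `α(m) = (Nat.digits 2 m).sum` is the number of
ones in the binary expansion of `m`. -/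
theorem stmt_0 (m i : ℕ) (hm : 1 ≤ m) (hi : i ≤ m - 1)
    (h : m ≤ i + (Nat.digits 2 m).sum) :
    (2 : ℤ) ^ (i + (Nat.digits 2 m).sum - m) ∣
      ∑ j ∈ Finset.range (i + 1),
        (2 : ℤ) ^ j * ((m + 1).choose j : ℤ) * (-1) ^ (i - j) *
          ((m + i - j).choose (i - j) : ℤ) :=
  stmt_0_general m i hi
end

section
/- For all integers m ≥ 0 and i ≥ 1, Σ_{j=0}^{i} 2^j · C(m+1, j) · (−1)^{i−j} · C(m+i−j, i−j) = (−1)^i · Σ_{j=0}^{i} (−1)^j · C(m+1, j) · C(i−1, i−j). (The left side is the coefficient of x^i in ((1+2x)/(1+x))^{m+1}; the right side is (−1)^i times the coefficient of x^i in (1−x)^{m+1}(1+x)^{i−1}.) -/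
/-!
With `Ring.choose` on `ℤ`, the signed coefficients on the left are `C(-(m+1), i-j)`, and
those on the right are `C(-j, i-j)`. Gould's identity `2^j C(n,j) = ∑_l C(n,l) C(n-l, j-l)`
(that is, `(1+2x)^n = ∑_l C(n,l) x^l (1+x)^(n-l)`) followed by Chu–Vandermonde
`∑_t C(n-l, t) C(-n, k-t) = C(-l, k)` turns one side into the other.
-/

open Finset

theorem neg_one_pow_sub {R : Type*} [CommMonoid R] [HasDistribNeg R] {i j : ℕ} (h : j ≤ i) :
    (-1 : R) ^ (i - j) = (-1) ^ i * (-1) ^ j := by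
  obtain ⟨k, rfl⟩ := Nat.exists_eq_add_of_le h
  rw [Nat.add_sub_cancel_left, pow_add, mul_right_comm, ← mul_pow]
  simp

-- The truncated `n + k - 1` keeps this right at `n = 0`, where `C(0, k) = [k = 0]`.
theorem Ring.choose_neg_natCast (n k : ℕ) :
    Ring.choose (-(n : ℤ)) k = (-1) ^ k * ((n + k - 1).choose k : ℤ) := by
  rcases Nat.eq_zero_or_pos (n + k) with h | h
  · obtain ⟨rfl, rfl⟩ : n = 0 ∧ k = 0 := by omega
    simp
  · rw [Ring.choose_neg, show (n : ℤ) + k - 1 = ((n + k - 1 : ℕ) : ℤ) by omega,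
      Ring.choose_natCast, Units.smul_def, Int.coe_negOnePow_natCast, smul_eq_mul]

theorem Ring.choose_neg_natCast_eq_sum_antidiagonal {l n : ℕ} (h : l ≤ n) (k : ℕ) :
    Ring.choose (-(l : ℤ)) k =
      ∑ p ∈ antidiagonal k, ((n - l).choose p.1 : ℤ) * Ring.choose (-(n : ℤ)) p.2 := by
  rw [show -(l : ℤ) = ((n - l : ℕ) : ℤ) + -(n : ℤ) by omega,
    Ring.add_choose_eq k (Commute.all _ _)]
  simp only [Ring.choose_natCast]

theorem Nat.two_pow_mul_choose (n j : ℕ) :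
    2 ^ j * n.choose j = ∑ p ∈ antidiagonal j, n.choose p.1 * (n - p.1).choose p.2 := by
  rw [← Nat.sum_range_choose, ← Nat.sum_antidiagonal_eq_sum_range_succ (fun a _ => j.choose a),
    sum_mul]
  refine sum_congr rfl fun p hp => ?_
  rw [HasAntidiagonal.mem_antidiagonal] at hp
  rw [mul_comm, Nat.choose_mul (hp ▸ Nat.le_add_right _ _), ← hp, Nat.add_sub_cancel_left]

theorem Finset.Nat.sum_antidiagonal_antidiagonal_fst {M : Type*} [AddCommMonoid M] (n : ℕ)
    (f : ℕ → ℕ → ℕ → M) :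
    ∑ p ∈ antidiagonal n, ∑ q ∈ antidiagonal p.1, f q.1 q.2 p.2 =
      ∑ p ∈ antidiagonal n, ∑ q ∈ antidiagonal p.2, f p.1 q.1 q.2 := by
  rw [sum_sigma', sum_sigma']
  refine sum_nbij' (fun x => ⟨(x.2.1, x.2.2 + x.1.2), (x.2.2, x.1.2)⟩)
    (fun x => ⟨(x.1.1 + x.2.1, x.2.2), (x.1.1, x.2.1)⟩) ?_ ?_ ?_ ?_ ?_ <;>
    simp +contextual [add_assoc]
  omega

theorem sum_two_pow_mul_choose_mul_choose_neg (n i : ℕ) :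
    ∑ p ∈ antidiagonal i, 2 ^ p.1 * (n.choose p.1 : ℤ) * Ring.choose (-(n : ℤ)) p.2 =
      ∑ p ∈ antidiagonal i, (n.choose p.1 : ℤ) * Ring.choose (-(p.1 : ℤ)) p.2 := by
  calc _ = ∑ p ∈ antidiagonal i, ∑ q ∈ antidiagonal p.1,
          (n.choose q.1 : ℤ) * ((n - q.1).choose q.2 * Ring.choose (-(n : ℤ)) p.2) := by
        refine sum_congr rfl fun p _ => ?_
        simp only [← mul_assoc, ← sum_mul]
        congr 1
        exact_mod_cast Nat.two_pow_mul_choose n p.1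
    _ = ∑ p ∈ antidiagonal i, ∑ q ∈ antidiagonal p.2,
          (n.choose p.1 : ℤ) * ((n - p.1).choose q.1 * Ring.choose (-(n : ℤ)) q.2) :=
        Nat.sum_antidiagonal_antidiagonal_fst i
          fun l t b => (n.choose l : ℤ) * ((n - l).choose t * Ring.choose (-(n : ℤ)) b)
    _ = _ := by
        refine sum_congr rfl fun p _ => ?_
        rw [← mul_sum]
        rcases le_or_gt p.1 n with h | h
        · rw [← Ring.choose_neg_natCast_eq_sum_antidiagonal h]
        · simp [Nat.choose_eq_zero_of_lt h]

theorem stmt_2_general (m i : ℕ) :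
    ∑ j ∈ Finset.range (i + 1),
        (2 : ℤ) ^ j * ((m + 1).choose j : ℤ) * (-1) ^ (i - j) *
          ((m + i - j).choose (i - j) : ℤ)
      = (-1) ^ i * ∑ j ∈ Finset.range (i + 1),
          (-1) ^ j * ((m + 1).choose j : ℤ) * ((i - 1).choose (i - j) : ℤ) := by
  calc _ = ∑ j ∈ range (i + 1),
          2 ^ j * ((m + 1).choose j : ℤ) * Ring.choose (-((m + 1 : ℕ) : ℤ)) (i - j) := by
        refine sum_congr rfl fun j hj => ?_
        have hj : j ≤ i := Nat.lt_succ_iff.mp (mem_range.mp hj)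
        rw [Ring.choose_neg_natCast, show m + 1 + (i - j) - 1 = m + i - j by omega]
        ring
    _ = ∑ p ∈ antidiagonal i, ((m + 1).choose p.1 : ℤ) * Ring.choose (-(p.1 : ℤ)) p.2 := by
        rw [← sum_two_pow_mul_choose_mul_choose_neg, Nat.sum_antidiagonal_eq_sum_range_succ
          (fun j b => 2 ^ j * ((m + 1).choose j : ℤ) * Ring.choose (-((m + 1 : ℕ) : ℤ)) b)]
    _ = ∑ j ∈ range (i + 1), ((m + 1).choose j : ℤ) * Ring.choose (-(j : ℤ)) (i - j) :=
        Nat.sum_antidiagonal_eq_sum_range_succ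
          (fun j b => ((m + 1).choose j : ℤ) * Ring.choose (-(j : ℤ)) b) i
    _ = _ := by
        rw [mul_sum]
        refine sum_congr rfl fun j hj => ?_
        have hj : j ≤ i := Nat.lt_succ_iff.mp (mem_range.mp hj)
        rw [Ring.choose_neg_natCast, show j + (i - j) - 1 = i - 1 by omega, neg_one_pow_sub hj]
        ring

/-- The coefficient manipulation in the proof of Proposition 4.5:
the coefficient of `x^i` in `((1+2x)/(1+x))^(m+1)` equals `(-1)^i` times the
coefficient of `x^i` in `(1-x)^(m+1) (1+x)^(i-1)`. -/
theorem stmt_2 (m i : ℕ) (hi : 1 ≤ i) :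
    ∑ j ∈ Finset.range (i + 1),
        (2 : ℤ) ^ j * ((m + 1).choose j : ℤ) * (-1) ^ (i - j) *
          ((m + i - j).choose (i - j) : ℤ)
      = (-1) ^ i * ∑ j ∈ Finset.range (i + 1),
          (-1) ^ j * ((m + 1).choose j : ℤ) * ((i - 1).choose (i - j) : ℤ) :=
  stmt_2_general m i
end

section
/- For every even integer m ≥ 2, the exponent of 2 in the binomial coefficient C(2m−2, m−2) equals α(m) − 1, where α(m) is the number of ones in the binary expansion of m. -/
/-! Kummer's theorem gives `v₂ C(2m-2, m-2) = s(m-2) + s(m) - s(2m-2)`, with `s` the binary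
digit sum. Since `m - 2` is even, `2m - 2 = 2 (m - 2 + 1)` has exactly one more binary one
than `m - 2`. -/

theorem Nat.digits_sum_add_base_mul {b : ℕ} (hb : 1 < b) {x : ℕ} (hx : x < b) (y : ℕ) :
    (b.digits (x + b * y)).sum = x + (b.digits y).sum := by
  rcases eq_or_ne x 0 with rfl | hx0
  · rcases eq_or_ne y 0 with rfl | hy0
    · simp
    · rw [Nat.digits_add b hb 0 y hx (Or.inr hy0), List.sum_cons]
  · rw [Nat.digits_add b hb x y hx (Or.inl hx0), List.sum_cons]

/-- For even `m ≥ 2`, the exponent of 2 in `C(2m-2, m-2)` equals `α(m) - 1`,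
where `α(m) = (Nat.digits 2 m).sum` is the number of ones in the binary
expansion of `m`. -/
theorem stmt_4 (m : ℕ) (hm : 2 ≤ m) (hme : Even m) :
    padicValNat 2 ((2 * m - 2).choose (m - 2)) = (Nat.digits 2 m).sum - 1 := by
  have : Fact (Nat.Prime 2) := ⟨Nat.prime_two⟩
  obtain ⟨j, hj⟩ : ∃ j, m - 2 = 0 + 2 * j := by
    obtain ⟨k, rfl⟩ := hme
    exact ⟨k - 1, by omega⟩
  have hkummer := sub_one_mul_padicValNat_choose_eq_sub_sum_digits (p := 2)
    (by omega : m - 2 ≤ 2 * m - 2)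
  have h_low : (Nat.digits 2 (m - 2)).sum = (Nat.digits 2 j).sum := by
    rw [hj, Nat.digits_sum_add_base_mul one_lt_two two_pos, zero_add]
  have h_top : (Nat.digits 2 (2 * m - 2)).sum = 1 + (Nat.digits 2 j).sum := by
    rw [show 2 * m - 2 = 0 + 2 * (1 + 2 * j) by omega,
      Nat.digits_sum_add_base_mul one_lt_two two_pos,
      Nat.digits_sum_add_base_mul one_lt_two one_lt_two, zero_add]
  rw [show 2 * m - 2 - (m - 2) = m by omega, h_low, h_top, Nat.add_one_sub_one, one_mul] at hkummer
  omega
end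

section
/- Let r ≥ 2 and 1 ≤ t ≤ r−1 be integers, and let S = Σ_{k} (−1)^k · C(2r−2t−1, k) · C(2t+2, 2r−2t−2k), where k ranges over all natural numbers (terms with 2r−2t−2k < 0 or 2r−2t−2k > 2t+2 or k > 2r−2t−1 vanish). If α(r) ≥ t+1, then 2^{α(r)−t−1} divides S. -/
/-!
Every term of the sum is divisible by the required power of two, because `2^(α(r)-t-1)`
already divides `C(2r-2t-1, k)` whenever the second factor is nonzero. Writing
`r - t = m + 1`, that factor is nonzero only when `m ≤ k + t`, and by Kummer's theorem the
2-adic valuation of `C(2m+1, k)` is `α(k) + α(2m+1-k) - α(m) - 1`. Subadditivity of the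
binary digit sum, in the weak form `α(a + b) ≤ α(a) + b`, bounds `α(m)` by `α(k) + (m - k)`
and `α(r)` by `α(2m+1-k) + (t + k - m)`, which together give the estimate for `k ≤ m`; the
remaining case `k = m + 1` reduces to `k = m` by the symmetry of binomial coefficients.
-/

open Nat

theorem Nat.digits_sum_add_le (p : ℕ) [Fact p.Prime] (a b : ℕ) :
    (p.digits (a + b)).sum ≤ (p.digits a).sum + (p.digits b).sum := by
  have hvalue : padicValNat p (a ! * b !) ≤ padicValNat p (a + b)! :=
    (padicValNat_dvd_iff_le (factorial_ne_zero _)).mp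
      (pow_padicValNat_dvd.trans (factorial_mul_factorial_dvd_factorial_add a b))
  have hlegendre : (p - 1) * padicValNat p a ! + (p - 1) * padicValNat p b ! ≤
      (p - 1) * padicValNat p (a + b)! := by
    rw [← mul_add, ← padicValNat.mul (factorial_ne_zero _) (factorial_ne_zero _)]
    exact Nat.mul_le_mul_left _ hvalue
  rw [sub_one_mul_padicValNat_factorial, sub_one_mul_padicValNat_factorial,
    sub_one_mul_padicValNat_factorial] at hlegendre
  have := digit_sum_le p a
  have := digit_sum_le p b
  have := digit_sum_le p (a + b)
  omega

theorem Nat.digits_sum_add_le_add (p : ℕ) [Fact p.Prime] (a b : ℕ) :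
    (p.digits (a + b)).sum ≤ (p.digits a).sum + b :=
  (digits_sum_add_le p a b).trans (Nat.add_le_add_left (digit_sum_le p b) _)

theorem Nat.digits_two_sum_two_mul_add_one (m : ℕ) :
    (Nat.digits 2 (2 * m + 1)).sum = (Nat.digits 2 m).sum + 1 := by
  rw [add_comm, digits_add 2 one_lt_two 1 m one_lt_two (Or.inl one_ne_zero), List.sum_cons,
    add_comm]

theorem digits_two_sum_le_padicValNat_choose {m t k : ℕ} (hkm : k ≤ m) (hmk : m ≤ k + t) :
    (Nat.digits 2 (m + 1 + t)).sum ≤ padicValNat 2 ((2 * m + 1).choose k) + t + 1 := by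
  have hkummer :=
    sub_one_mul_padicValNat_choose_eq_sub_sum_digits (p := 2) (by omega : k ≤ 2 * m + 1)
  rw [digits_two_sum_two_mul_add_one] at hkummer
  have hm : (Nat.digits 2 m).sum ≤ (Nat.digits 2 k).sum + (m - k) := by
    simpa [show k + (m - k) = m by omega] using digits_sum_add_le_add 2 k (m - k)
  have hr : (Nat.digits 2 (m + 1 + t)).sum ≤
      (Nat.digits 2 (2 * m + 1 - k)).sum + (t + k - m) := by
    simpa [show 2 * m + 1 - k + (t + k - m) = m + 1 + t by omega] using
      digits_sum_add_le_add 2 (2 * m + 1 - k) (t + k - m)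
  omega

theorem two_pow_dvd_choose_two_mul_add_one {m t k : ℕ} (hkm : k ≤ m + 1) (hmk : m ≤ k + t) :
    2 ^ ((Nat.digits 2 (m + 1 + t)).sum - t - 1) ∣ (2 * m + 1).choose k := by
  obtain ⟨k', hk'm, hk'mk, hchoose⟩ :
      ∃ k' ≤ m, m ≤ k' + t ∧ (2 * m + 1).choose k = (2 * m + 1).choose k' := by
    obtain rfl | hkm := eq_or_lt_of_le hkm
    · exact ⟨m, le_rfl, by omega, choose_symm_half m⟩
    · exact ⟨k, by omega, hmk, rfl⟩
  rw [hchoose]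
  refine (pow_dvd_pow 2 ?_).trans pow_padicValNat_dvd
  have := digits_two_sum_le_padicValNat_choose hk'm hk'mk
  omega

theorem stmt_6_general (r t : ℕ)
    (h : t + 1 ≤ (Nat.digits 2 r).sum) :
    (2 : ℤ) ^ ((Nat.digits 2 r).sum - t - 1) ∣
      ∑ k ∈ Finset.range (r - t + 1),
        (-1) ^ k * ((2 * r - 2 * t - 1).choose k : ℤ) *
          ((2 * t + 2).choose (2 * r - 2 * t - 2 * k) : ℤ) := by
  obtain ⟨m, rfl⟩ : ∃ m, r = m + 1 + t :=
    ⟨r - t - 1, by have := digit_sum_le 2 r; omega⟩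
  refine Finset.dvd_sum fun k hmem => ?_
  have hk : k ≤ m + 1 := by rw [Finset.mem_range] at hmem; omega
  by_cases hvanish : 2 * t + 2 < 2 * (m + 1 + t) - 2 * t - 2 * k
  · simp [choose_eq_zero_of_lt hvanish]
  rw [show 2 * (m + 1 + t) - 2 * t - 1 = 2 * m + 1 by omega]
  have hdvd :
      (2 : ℤ) ^ ((Nat.digits 2 (m + 1 + t)).sum - t - 1) ∣ ((2 * m + 1).choose k : ℤ) := by
    exact_mod_cast two_pow_dvd_choose_two_mul_add_one hk (by omega)
  exact (hdvd.mul_left _).mul_right _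

/-- The core estimate in the proof of Proposition 4.5 (case `m = 2r`, `i = 2r-2t`):
if `α(r) ≥ t+1` then `2^(α(r)-t-1)` divides
`S = ∑_k (-1)^k C(2r-2t-1, k) C(2t+2, 2r-2t-2k)`.  (Terms with `k > r - t`
vanish since then `2r-2t-2k < 0`, and terms with `k > 2r-2t-1` vanish as well,
so the sum may be taken over `0 ≤ k ≤ r - t`.)
Here `α(r) = (Nat.digits 2 r).sum`. -/
theorem stmt_6 (r t : ℕ) (hr : 2 ≤ r) (ht1 : 1 ≤ t) (ht2 : t ≤ r - 1)
    (h : t + 1 ≤ (Nat.digits 2 r).sum) :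
    (2 : ℤ) ^ ((Nat.digits 2 r).sum - t - 1) ∣
      ∑ k ∈ Finset.range (r - t + 1),
        (-1) ^ k * ((2 * r - 2 * t - 1).choose k : ℤ) *
          ((2 * t + 2).choose (2 * r - 2 * t - 2 * k) : ℤ) :=
  stmt_6_general r t h
end

section
/- Let n ≥ 5 and 1 ≤ k ≤ n−1 be integers, and let ℓ = (ℓ₁,…,ℓₙ) be given by ℓᵢ = 1 for 1 ≤ i ≤ k, ℓᵢ = 2 for k < i ≤ n−1, and ℓₙ = 2n−k−5. Then for a subset S ⊆ {1,…,n−1}, the set S ∪ {n} is short (i.e. Σ_{i∈S∪{n}} ℓᵢ < Σ_{i∉S∪{n}} ℓᵢ) if and only if S = ∅ or S = {i} for some i with 1 ≤ i ≤ k. -/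
/-!
Writing `L = ∑ᵢ ℓᵢ = 4n - 2k - 7`, a set `T` is short iff `2 ∑_T ℓ < L`. For `T = S ∪ {n}` this
becomes `∑_S ℓ < 3/2`, because `2ℓₙ = L - 3`. Since every `ℓᵢ` with `i < n` is
`1` or `2`, the sets `S` with `∑_S ℓ < 3/2` are `∅` and the singletons `{i}` with `ℓᵢ = 1`.
-/

open Finset

theorem Finset.sum_lt_sum_sdiff_iff {ι M : Type*} [DecidableEq ι] [AddCommGroup M] [PartialOrder M]
    [IsOrderedAddMonoid M] {f : ι → M} {s t : Finset ι} (h : t ⊆ s) :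
    ∑ i ∈ t, f i < ∑ i ∈ s \ t, f i ↔ ∑ i ∈ t, f i + ∑ i ∈ t, f i < ∑ i ∈ s, f i := by
  rw [sum_sdiff_eq_sub h, lt_sub_iff_add_lt]

theorem Finset.sum_lt_iff_eq_empty_or_eq_singleton {ι : Type*} {f : ι → ℝ} {s : Finset ι} {c : ℝ}
    (hf : ∀ i ∈ s, 1 ≤ f i) (hc₀ : 0 < c) (hc₂ : c ≤ 2) :
    ∑ i ∈ s, f i < c ↔ s = ∅ ∨ ∃ i, s = {i} ∧ f i < c := by
  constructor
  · intro h
    have hcard : #s ≤ 1 := by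
      by_contra! htwo
      have hsum : (#s : ℝ) ≤ ∑ i ∈ s, f i := by simpa using s.card_nsmul_le_sum f 1 hf
      have : (2 : ℝ) ≤ #s := by exact_mod_cast htwo
      linarith
    rcases Nat.le_one_iff_eq_zero_or_eq_one.mp hcard with hzero | hone
    · exact .inl (card_eq_zero.mp hzero)
    · obtain ⟨i, rfl⟩ := card_eq_one.mp hone
      exact .inr ⟨i, rfl, by simpa using h⟩
  · rintro (rfl | ⟨i, rfl, hi⟩) <;> simpa

theorem sum_Icc_of_lengths {n k : ℕ} {ℓ : ℕ → ℝ} (hn : 1 ≤ n) (hk : k ≤ n - 1)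
    (hℓ1 : ∀ i, 1 ≤ i → i ≤ k → ℓ i = 1) (hℓ2 : ∀ i, k < i → i ≤ n - 1 → ℓ i = 2) :
    ∑ i ∈ Icc 1 n, ℓ i = k + 2 * ((n : ℝ) - 1 - k) + ℓ n := by
  obtain ⟨m, rfl⟩ : ∃ m, n = m + 1 := ⟨n - 1, by omega⟩
  rw [Nat.add_sub_cancel] at hk hℓ2
  have hones : ∑ i ∈ Ioc 0 k, ℓ i = k := by
    rw [sum_eq_card_nsmul fun i hi ↦ hℓ1 i (mem_Ioc.mp hi).1 (mem_Ioc.mp hi).2]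
    simp
  have htwos : ∑ i ∈ Ioc k m, ℓ i = 2 * ((m : ℝ) - k) := by
    rw [sum_eq_card_nsmul fun i hi ↦ hℓ2 i (mem_Ioc.mp hi).1 (mem_Ioc.mp hi).2]
    simp [Nat.cast_sub hk, mul_comm]
  rw [show Icc 1 (m + 1) = Ioc 0 (m + 1) from Icc_add_one_left_eq_Ioc 0 (m + 1),
    sum_Ioc_succ_top (Nat.zero_le m), ← sum_Ioc_consecutive ℓ (Nat.zero_le k) hk, hones, htwos]
  push_cast
  ring

theorem one_le_of_lengths {n k : ℕ} {ℓ : ℕ → ℝ}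
    (hℓ1 : ∀ i, 1 ≤ i → i ≤ k → ℓ i = 1) (hℓ2 : ∀ i, k < i → i ≤ n - 1 → ℓ i = 2) :
    ∀ i ∈ Icc 1 (n - 1), 1 ≤ ℓ i := by
  intro i hi
  obtain ⟨hi1, hin⟩ := mem_Icc.mp hi
  rcases le_or_gt i k with hik | hik
  · rw [hℓ1 i hi1 hik]
  · rw [hℓ2 i hik hin]
    norm_num

theorem stmt_9_general (n k : ℕ) (hn : 5 ≤ n) (hk2 : k ≤ n - 1)
    (ℓ : ℕ → ℝ)
    (hℓ1 : ∀ i, 1 ≤ i → i ≤ k → ℓ i = 1)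
    (hℓ2 : ∀ i, k < i → i ≤ n - 1 → ℓ i = 2)
    (hℓ3 : ℓ n = 2 * n - k - 5) :
    ∀ S ⊆ Finset.Icc 1 (n - 1),
      (∑ i ∈ insert n S, ℓ i < ∑ i ∈ Finset.Icc 1 n \ insert n S, ℓ i ↔
        S = ∅ ∨ ∃ i, 1 ≤ i ∧ i ≤ k ∧ S = {i}) := by
  intro S hS
  have hnS : n ∉ S := fun h ↦ by have := mem_Icc.mp (hS h); omega
  have hsub : insert n S ⊆ Icc 1 n :=
    insert_subset (mem_Icc.mpr ⟨by omega, le_rfl⟩) (hS.trans (Icc_subset_Icc_right (by omega)))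
  have hshort : ∑ i ∈ insert n S, ℓ i < ∑ i ∈ Icc 1 n \ insert n S, ℓ i ↔ ∑ i ∈ S, ℓ i < 3 / 2 := by
    rw [sum_lt_sum_sdiff_iff hsub, sum_insert hnS, sum_Icc_of_lengths (by omega) hk2 hℓ1 hℓ2, hℓ3]
    constructor <;> intro h <;> linarith
  rw [hshort, sum_lt_iff_eq_empty_or_eq_singleton (fun i hi ↦ one_le_of_lengths hℓ1 hℓ2 i (hS hi))
    (by norm_num) (by norm_num)]
  refine or_congr_right (exists_congr fun i ↦ ⟨?_, ?_⟩)
  · rintro ⟨rfl, hi⟩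
    obtain ⟨hi1, hin⟩ := mem_Icc.mp (hS (mem_singleton_self i))
    refine ⟨hi1, ?_, rfl⟩
    by_contra! hik
    rw [hℓ2 i hik hin] at hi
    norm_num at hi
  · rintro ⟨hi1, hik, rfl⟩
    exact ⟨rfl, by rw [hℓ1 i hi1 hik]; norm_num⟩

/-- For the length vector `ℓ = (1,…,1,2,…,2,2n-k-5)` (with `k` ones), a subset
`S ⊆ {1,…,n-1}` has `S ∪ {n}` short if and only if `S = ∅` or `S = {i}` with
`1 ≤ i ≤ k`; i.e. the subgees are exactly `∅` and `{1},…,{k}`. -/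
theorem stmt_9 (n k : ℕ) (hn : 5 ≤ n) (hk1 : 1 ≤ k) (hk2 : k ≤ n - 1)
    (ℓ : ℕ → ℝ)
    (hℓ1 : ∀ i, 1 ≤ i → i ≤ k → ℓ i = 1)
    (hℓ2 : ∀ i, k < i → i ≤ n - 1 → ℓ i = 2)
    (hℓ3 : ℓ n = 2 * n - k - 5) :
    ∀ S ⊆ Finset.Icc 1 (n - 1),
      (∑ i ∈ insert n S, ℓ i < ∑ i ∈ Finset.Icc 1 n \ insert n S, ℓ i ↔
        S = ∅ ∨ ∃ i, 1 ≤ i ∧ i ≤ k ∧ S = {i}) :=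
  stmt_9_general n k hn hk2 ℓ hℓ1 hℓ2 hℓ3
end

section
/- Let n ≥ 6 and 2 ≤ k ≤ n−1 be integers, and let ℓ = (ℓ₁,…,ℓₙ) be given by ℓ₁ = 1/2, ℓᵢ = 1 for 2 ≤ i ≤ k, ℓᵢ = 2 for k < i ≤ n−1, and ℓₙ = 2n−k−6. Then for a subset S ⊆ {1,…,n−1}, the set S ∪ {n} is short (i.e. Σ_{i∈S∪{n}} ℓᵢ < Σ_{i∉S∪{n}} ℓᵢ) if and only if S is one of: ∅, {1}, {i} for some 2 ≤ i ≤ k, or {1, i} for some 2 ≤ i ≤ k; equivalently, if and only if S ⊆ {1, i} for some i with 1 ≤ i ≤ k. -/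
/-!
Since `n ∉ S`, the set `S ∪ {n}` is short iff `2 (ℓₙ + Σ_S ℓ) < Σ ℓ`. The total length is
`4n - 2k - 17/2`, so this says exactly `Σ_S ℓ < 7/4`. Every index other than `1` has length at
least `1` and every index beyond `k` has length `2`, hence `S` contains at most one index besides
`1`, and that index is at most `k`.
-/

open Finset

theorem Finset.subset_pair_iff_eq {α : Type*} [DecidableEq α] {s : Finset α} {a b : α} :
    s ⊆ {a, b} ↔ s = ∅ ∨ s = {a} ∨ s = {b} ∨ s = {a, b} := by
  rw [← coe_subset, coe_pair, Set.subset_pair_iff_eq, ← coe_pair, ← coe_singleton a,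
    ← coe_singleton b, coe_eq_empty, coe_inj, coe_inj, coe_inj]

theorem sum_insert_lt_sum_sdiff_iff {ι K : Type*} [DecidableEq ι] [Field K] [LinearOrder K]
    [IsStrictOrderedRing K] {U S : Finset ι} {a : ι} {f : ι → K}
    (hSU : S ⊆ U) (haU : a ∈ U) (haS : a ∉ S) :
    ∑ i ∈ insert a S, f i < ∑ i ∈ U \ insert a S, f i ↔
      2 * ∑ i ∈ S, f i < ∑ i ∈ U, f i - 2 * f a := by
  rw [sum_sdiff_eq_sub (insert_subset haU hSU), sum_insert haS]
  constructor <;> intro h <;> linarith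

theorem sum_Ioc_eq_of_forall_eq {M : Type*} [Ring M] {f : ℕ → M} {a b : ℕ} {c : M}
    (hab : a ≤ b) (hf : ∀ i ∈ Ioc a b, f i = c) :
    ∑ i ∈ Ioc a b, f i = ((b : M) - a) * c := by
  rw [sum_congr rfl hf, sum_const, Nat.card_Ioc, nsmul_eq_mul, Nat.cast_sub hab]

section Lengths

variable {n k : ℕ} {ℓ : ℕ → ℝ}

theorem sum_Icc_lengths (hk1 : 1 ≤ k) (hk2 : k ≤ n - 1) (hℓ0 : ℓ 1 = 1 / 2)
    (hℓ1 : ∀ i, 2 ≤ i → i ≤ k → ℓ i = 1) (hℓ2 : ∀ i, k < i → i ≤ n - 1 → ℓ i = 2)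
    (hℓ3 : ℓ n = 2 * n - k - 6) :
    ∑ i ∈ Icc 1 n, ℓ i = 4 * n - 2 * k - 17 / 2 := by
  have hmid : ∑ i ∈ Ioc 1 k, ℓ i = (k : ℝ) - 1 := by
    simpa using sum_Ioc_eq_of_forall_eq hk1 fun i hi ↦ hℓ1 i (mem_Ioc.1 hi).1 (mem_Ioc.1 hi).2
  have hhigh : ∑ i ∈ Ioc k (n - 1), ℓ i = (((n - 1 : ℕ) : ℝ) - k) * 2 :=
    sum_Ioc_eq_of_forall_eq hk2 fun i hi ↦ hℓ2 i (mem_Ioc.1 hi).1 (mem_Ioc.1 hi).2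
  obtain ⟨m, rfl⟩ : ∃ m, n = m + 1 := ⟨n - 1, by omega⟩
  rw [Nat.add_sub_cancel] at hk2 hhigh
  rw [show Icc 1 (m + 1) = Ioc 0 (m + 1) from Icc_add_one_left_eq_Ioc 0 _,
    sum_Ioc_succ_top (Nat.zero_le m), ← sum_Ioc_consecutive ℓ (Nat.zero_le _) hk2,
    ← sum_Ioc_consecutive ℓ zero_le_one hk1,
    hmid, hhigh, show Ioc 0 1 = {1} from rfl, sum_singleton, hℓ0, hℓ3]
  push_cast
  ring

theorem length_nonneg (hℓ0 : ℓ 1 = 1 / 2) (hℓ1 : ∀ i, 2 ≤ i → i ≤ k → ℓ i = 1)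
    (hℓ2 : ∀ i, k < i → i ≤ n - 1 → ℓ i = 2) {i : ℕ} (hi : i ∈ Icc 1 (n - 1)) : 0 ≤ ℓ i := by
  rw [mem_Icc] at hi
  rcases (show i = 1 ∨ (2 ≤ i ∧ i ≤ k) ∨ k < i by omega) with rfl | ⟨h2, hk⟩ | hk
  · norm_num [hℓ0]
  · norm_num [hℓ1 i h2 hk]
  · norm_num [hℓ2 i hk hi.2]

theorem one_le_length (hℓ1 : ∀ i, 2 ≤ i → i ≤ k → ℓ i = 1)
    (hℓ2 : ∀ i, k < i → i ≤ n - 1 → ℓ i = 2) {i : ℕ} (hi : i ∈ Icc 1 (n - 1)) (hi1 : i ≠ 1) :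
    1 ≤ ℓ i := by
  rw [mem_Icc] at hi
  rcases le_or_gt i k with hk | hk
  · rw [hℓ1 i (by omega) hk]
  · norm_num [hℓ2 i hk hi.2]

theorem sum_lt_seven_fourths_iff (hk1 : 1 ≤ k) (hk2 : k ≤ n - 1) (hℓ0 : ℓ 1 = 1 / 2)
    (hℓ1 : ∀ i, 2 ≤ i → i ≤ k → ℓ i = 1) (hℓ2 : ∀ i, k < i → i ≤ n - 1 → ℓ i = 2)
    {S : Finset ℕ} (hS : S ⊆ Icc 1 (n - 1)) :
    ∑ i ∈ S, ℓ i < 7 / 4 ↔ ∃ i, 1 ≤ i ∧ i ≤ k ∧ S ⊆ {1, i} := by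
  have hnonneg := fun i (hi : i ∈ Icc 1 (n - 1)) ↦ length_nonneg hℓ0 hℓ1 hℓ2 hi
  constructor
  · intro hsum
    set T := S.erase 1
    have hT : ∑ i ∈ T, ℓ i < 7 / 4 :=
      (sum_le_sum_of_subset_of_nonneg (erase_subset 1 S) fun i hi _ ↦ hnonneg i (hS hi)).trans_lt
        hsum
    have hcard : #T ≤ 1 := by
      have hle := card_nsmul_le_sum T ℓ 1 fun i hi ↦
        one_le_length hℓ1 hℓ2 (hS (mem_of_mem_erase hi)) (ne_of_mem_erase hi)
      rw [nsmul_eq_mul, mul_one] at hle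
      exact Nat.lt_succ_iff.mp (by exact_mod_cast (by linarith : (#T : ℝ) < 2))
    obtain ⟨j, hTj⟩ := card_le_one_iff_subset_singleton.mp hcard
    by_cases hjT : j ∈ T
    · have hj := mem_Icc.mp (hS (mem_of_mem_erase hjT))
      have hjk : j ≤ k := by
        by_contra! hkj
        have := single_le_sum (fun i hi ↦ hnonneg i (hS (mem_of_mem_erase hi))) hjT
        linarith [hℓ2 j hkj hj.2]
      exact ⟨j, hj.1, hjk, subset_insert_iff.mpr hTj⟩
    · refine ⟨1, le_rfl, hk1, subset_insert_iff.mpr fun i hi ↦ ?_⟩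
      exact absurd (mem_singleton.mp (hTj hi) ▸ hi) hjT
  · rintro ⟨i, hi1, hik, hSi⟩
    have hpair : ∑ j ∈ {1, i}, ℓ j ≤ 3 / 2 := by
      rcases hi1.eq_or_lt with rfl | hi2
      · norm_num [hℓ0]
      · rw [sum_pair hi2.ne, hℓ0, hℓ1 i hi2 hik]
        norm_num
    have hsub : ({1, i} : Finset ℕ) ⊆ Icc 1 (n - 1) := by
      intro j hj
      rw [mem_insert, mem_singleton] at hj
      rw [mem_Icc]
      omega
    have := sum_le_sum_of_subset_of_nonneg hSi fun j hj _ ↦ hnonneg j (hsub hj)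
    linarith

end Lengths

theorem subgee_cases_iff_subset_pair {k : ℕ} (hk : 1 ≤ k) {S : Finset ℕ} :
    (S = ∅ ∨ S = {1} ∨ (∃ i, 2 ≤ i ∧ i ≤ k ∧ S = {i}) ∨ (∃ i, 2 ≤ i ∧ i ≤ k ∧ S = {1, i})) ↔
      ∃ i, 1 ≤ i ∧ i ≤ k ∧ S ⊆ {1, i} := by
  constructor
  · rintro (rfl | rfl | ⟨i, hi1, hi2, rfl⟩ | ⟨i, hi1, hi2, rfl⟩)
    · exact ⟨1, le_rfl, hk, empty_subset _⟩
    · exact ⟨1, le_rfl, hk, by simp⟩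
    · exact ⟨i, by omega, hi2, by simp⟩
    · exact ⟨i, by omega, hi2, subset_rfl⟩
  · rintro ⟨i, hi1, hik, hSi⟩
    rcases hi1.eq_or_lt with rfl | hi2
    · rw [pair_eq_singleton, subset_singleton_iff] at hSi
      tauto
    · rcases subset_pair_iff_eq.mp hSi with h | h | h | h
      · exact Or.inl h
      · exact Or.inr (Or.inl h)
      · exact Or.inr (Or.inr (Or.inl ⟨i, hi2, hik, h⟩))
      · exact Or.inr (Or.inr (Or.inr ⟨i, hi2, hik, h⟩))

theorem stmt_11_general (n k : ℕ) (hk1 : 2 ≤ k) (hk2 : k ≤ n - 1)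
    (ℓ : ℕ → ℝ)
    (hℓ0 : ℓ 1 = 1 / 2)
    (hℓ1 : ∀ i, 2 ≤ i → i ≤ k → ℓ i = 1)
    (hℓ2 : ∀ i, k < i → i ≤ n - 1 → ℓ i = 2)
    (hℓ3 : ℓ n = 2 * n - k - 6) :
    ∀ S ⊆ Finset.Icc 1 (n - 1),
      ((∑ i ∈ insert n S, ℓ i < ∑ i ∈ Finset.Icc 1 n \ insert n S, ℓ i ↔
          S = ∅ ∨ S = {1} ∨ (∃ i, 2 ≤ i ∧ i ≤ k ∧ S = {i}) ∨
            (∃ i, 2 ≤ i ∧ i ≤ k ∧ S = {1, i})) ∧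
        (∑ i ∈ insert n S, ℓ i < ∑ i ∈ Finset.Icc 1 n \ insert n S, ℓ i ↔
          ∃ i, 1 ≤ i ∧ i ≤ k ∧ S ⊆ {1, i})) := by
  intro S hS
  have hk : 1 ≤ k := by omega
  have hnS : n ∉ S := fun h ↦ by have := mem_Icc.mp (hS h); omega
  have hSU : S ⊆ Icc 1 n := hS.trans (Icc_subset_Icc_right (Nat.sub_le n 1))
  have hshort :
      ∑ i ∈ insert n S, ℓ i < ∑ i ∈ Icc 1 n \ insert n S, ℓ i ↔ ∑ i ∈ S, ℓ i < 7 / 4 := by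
    rw [sum_insert_lt_sum_sdiff_iff hSU (mem_Icc.mpr ⟨by omega, le_rfl⟩) hnS,
      sum_Icc_lengths hk hk2 hℓ0 hℓ1 hℓ2 hℓ3, hℓ3]
    constructor <;> intro h <;> linarith
  rw [hshort, sum_lt_seven_fourths_iff hk hk2 hℓ0 hℓ1 hℓ2 hS, subgee_cases_iff_subset_pair hk]
  exact ⟨Iff.rfl, Iff.rfl⟩

/-- For the length vector `ℓ = (1/2,1,…,1,2,…,2,2n-k-6)` (with `k-1` ones),
a subset `S ⊆ {1,…,n-1}` has `S ∪ {n}` short if and only if `S` is one of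
`∅`, `{1}`, `{i}` (`2 ≤ i ≤ k`), or `{1,i}` (`2 ≤ i ≤ k`); equivalently, iff
`S ⊆ {1,i}` for some `1 ≤ i ≤ k`. -/
theorem stmt_11 (n k : ℕ) (hn : 6 ≤ n) (hk1 : 2 ≤ k) (hk2 : k ≤ n - 1)
    (ℓ : ℕ → ℝ)
    (hℓ0 : ℓ 1 = 1 / 2)
    (hℓ1 : ∀ i, 2 ≤ i → i ≤ k → ℓ i = 1)
    (hℓ2 : ∀ i, k < i → i ≤ n - 1 → ℓ i = 2)
    (hℓ3 : ℓ n = 2 * n - k - 6) :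
    ∀ S ⊆ Finset.Icc 1 (n - 1),
      ((∑ i ∈ insert n S, ℓ i < ∑ i ∈ Finset.Icc 1 n \ insert n S, ℓ i ↔
          S = ∅ ∨ S = {1} ∨ (∃ i, 2 ≤ i ∧ i ≤ k ∧ S = {i}) ∨
            (∃ i, 2 ≤ i ∧ i ≤ k ∧ S = {1, i})) ∧
        (∑ i ∈ insert n S, ℓ i < ∑ i ∈ Finset.Icc 1 n \ insert n S, ℓ i ↔
          ∃ i, 1 ≤ i ∧ i ≤ k ∧ S ⊆ {1, i})) :=
  stmt_11_general n k hk1 hk2 ℓ hℓ0 hℓ1 hℓ2 hℓ3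
end

section
/- Let m ≥ 2 and k ≥ 1 be integers. Let A be the quotient of the polynomial ring ℤ[R, V₁,…,V_k] by the ideal generated by: (i) V_iV_j for all 1 ≤ i < j ≤ k; (ii) V_i² + RV_i for all 1 ≤ i ≤ k; and (iii) for each 1 ≤ i ≤ k, the element R^m + Σ_{1≤j≤k, j≠i} R^{m−1}V_j. Then A is a free abelian group with basis {1} ∪ {R^j : 1 ≤ j ≤ m−1} ∪ {V_i^j : 1 ≤ i ≤ k, 1 ≤ j ≤ m−1} ∪ {V_1^m}, and in A the following identities hold: V_1^m = V_2^m = ⋯ = V_k^m, R^m = (−1)^m (k−1) V_1^m, and R^{m+1} = 0 = V_i^{m+1} for all i. -/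
/-!
Write `r = X 0` and `vᵢ = X i` for `i ≠ 0`. In the quotient `r vᵢ = -vᵢ²` and `vᵢ vⱼ = 0` for
`i ≠ j`, so a monomial becomes `0` if it contains two distinct `v`s, `(-1)ᵃ vᵢ^(a+b)` if it is
`rᵃ vᵢᵇ` with `b ≠ 0`, and stays `rᵃ` otherwise. Relation (iii) for `i` reads
`r^(m-1) vᵢ = r^m + ∑_{j ≠ 0} r^(m-1) vⱼ`, whose right side does not depend on `i`; since
`r^(m-1) vᵢ = (-1)^(m-1) vᵢ^m`, this gives `vᵢ^m = v₁^m` and `r^m = (-1)^m (k-1) v₁^m`, and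
multiplying it by `vᵢ` or `r` kills `vᵢ^(m+1)` and `r^(m+1)`. So the proposed family spans.

Conversely, the same reduction read off exponent vectors defines a linear map from the polynomial
ring to the free module on the index set. It kills every monomial multiple of every generator,
hence the ideal, and the induced map on the quotient sends the family to the standard basis.
-/

open MvPolynomial

namespace PolygonSpace

variable (R : Type*) [CommRing R] (m k : ℕ)

-- `X 0` is the paper's `R` and `X i`, `1 ≤ i ≤ k`, is `Vᵢ`.
abbrev BasisIndex : Type :=
  {p : Fin (k + 1) × ℕ //
    (p.1 = 0 ∧ p.2 ≤ m - 1) ∨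
    (1 ≤ (p.1 : ℕ) ∧ 1 ≤ p.2 ∧ p.2 ≤ m - 1) ∨
    ((p.1 : ℕ) = 1 ∧ p.2 = m)}

def relations : Set (MvPolynomial (Fin (k + 1)) R) :=
  {f | ∃ i j : Fin (k + 1), 1 ≤ (i : ℕ) ∧ (i : ℕ) < (j : ℕ) ∧ f = X i * X j} ∪
  {f | ∃ i : Fin (k + 1), 1 ≤ (i : ℕ) ∧ f = X i ^ 2 + X 0 * X i} ∪
  {f | ∃ i : Fin (k + 1), 1 ≤ (i : ℕ) ∧
    f = X 0 ^ m + ∑ j ∈ Finset.univ.filter (fun j : Fin (k + 1) => 1 ≤ (j : ℕ) ∧ j ≠ i),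
      X 0 ^ (m - 1) * X j}

local notation "𝒜" => MvPolynomial (Fin (k + 1)) R ⧸ Ideal.span (relations R m k)
local notation "π" => Ideal.Quotient.mk (Ideal.span (relations R m k))

noncomputable def powers (p : BasisIndex m k) : 𝒜 := π (X p.1.1) ^ p.1.2

variable {R m k}

lemma one_le_val_iff {i : Fin (k + 1)} : 1 ≤ (i : ℕ) ↔ i ≠ 0 := by
  rw [Nat.one_le_iff_ne_zero, ne_eq, Fin.val_eq_zero_iff]

lemma val_one_of_one_le (hk : 1 ≤ k) : ((1 : Fin (k + 1)) : ℕ) = 1 := by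
  rw [Fin.val_one', Nat.mod_eq_of_lt (by omega)]

lemma one_ne_zero_of_one_le (hk : 1 ≤ k) : (1 : Fin (k + 1)) ≠ 0 := by
  rw [← one_le_val_iff, val_one_of_one_le hk]

lemma filter_ne_eq_erase_erase (i : Fin (k + 1)) :
    Finset.univ.filter (fun j : Fin (k + 1) => 1 ≤ (j : ℕ) ∧ j ≠ i) =
      (Finset.univ.erase 0).erase i := by
  ext j
  simp only [one_le_val_iff, Finset.mem_filter, Finset.mem_univ, true_and, Finset.mem_erase]
  tauto

def IsMixed (μ : Fin (k + 1) →₀ ℕ) : Prop :=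
  ∃ i j, i ≠ 0 ∧ j ≠ 0 ∧ i ≠ j ∧ μ i ≠ 0 ∧ μ j ≠ 0

lemma eq_single_add_single_or_exists {i : Fin (k + 1)} (hi : i ≠ 0) (μ : Fin (k + 1) →₀ ℕ) :
    μ = Finsupp.single 0 (μ 0) + Finsupp.single i (μ i) ∨ ∃ j, j ≠ 0 ∧ j ≠ i ∧ μ j ≠ 0 := by
  refine or_iff_not_imp_right.2 fun h => Finsupp.ext fun j => ?_
  push Not at h
  by_cases hj0 : j = 0
  · subst hj0; simp [Ne.symm hi]
  by_cases hji : j = i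
  · subst hji; simp [Ne.symm hj0]
  · simp [Ne.symm hj0, Ne.symm hji, h j hj0 hji]

lemma isMixed_or_eq_single_add_single_or_eq_single (μ : Fin (k + 1) →₀ ℕ) :
    IsMixed μ ∨ (∃ i a b, i ≠ 0 ∧ b ≠ 0 ∧ μ = Finsupp.single 0 a + Finsupp.single i b) ∨
      μ = Finsupp.single 0 (μ 0) := by
  by_cases h : ∃ i, i ≠ 0 ∧ μ i ≠ 0
  · obtain ⟨i, hi, hμi⟩ := h
    rcases eq_single_add_single_or_exists hi μ with hμ | ⟨j, hj, hji, hμj⟩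
    · exact Or.inr (Or.inl ⟨i, μ 0, μ i, hi, hμi, hμ⟩)
    · exact Or.inl ⟨i, j, hi, hj, Ne.symm hji, hμi, hμj⟩
  · push Not at h
    refine Or.inr (Or.inr (Finsupp.ext fun j => ?_))
    by_cases hj : j = 0
    · subst hj; simp
    · simp [Ne.symm hj, h j hj]

section Relations

lemma mk_eq_zero_of_mem {f : MvPolynomial (Fin (k + 1)) R} (hf : f ∈ relations R m k) :
    π f = 0 :=
  Ideal.Quotient.eq_zero_iff_mem.2 (Ideal.subset_span hf)

lemma mk_X_mul_X {i j : Fin (k + 1)} (hi : i ≠ 0) (hj : j ≠ 0) (hij : i ≠ j) :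
    π (X i) * π (X j) = (0 : 𝒜) := by
  rcases lt_or_gt_of_ne hij with h | h
  · rw [← map_mul]
    exact mk_eq_zero_of_mem (Or.inl (Or.inl ⟨i, j, one_le_val_iff.2 hi, h, rfl⟩))
  · rw [mul_comm, ← map_mul]
    exact mk_eq_zero_of_mem (Or.inl (Or.inl ⟨j, i, one_le_val_iff.2 hj, h, rfl⟩))

lemma mk_X_zero_mul_X {i : Fin (k + 1)} (hi : i ≠ 0) :
    π (X 0) * π (X i) = -π (X i) ^ 2 := by
  have h : π (X i ^ 2 + X 0 * X i) = (0 : 𝒜) :=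
    mk_eq_zero_of_mem (Or.inl (Or.inr ⟨i, one_le_val_iff.2 hi, rfl⟩))
  rw [map_add, map_pow, map_mul] at h
  linear_combination h

lemma mk_X_zero_pow_pred_mul_X_eq_sum {i : Fin (k + 1)} (hi : i ≠ 0) :
    π (X 0) ^ (m - 1) * π (X i) =
      π (X 0) ^ m + ∑ j ∈ Finset.univ.erase 0, π (X 0) ^ (m - 1) * π (X j) := by
  have h : π (X 0 ^ m + ∑ j ∈ Finset.univ.filter (fun j : Fin (k + 1) => 1 ≤ (j : ℕ) ∧ j ≠ i),
      X 0 ^ (m - 1) * X j) = (0 : 𝒜) :=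
    mk_eq_zero_of_mem (Or.inr ⟨i, one_le_val_iff.2 hi, rfl⟩)
  rw [filter_ne_eq_erase_erase] at h
  simp only [map_add, map_sum, map_mul, map_pow] at h
  rw [← Finset.sum_erase_add _ _ (Finset.mem_erase.2 ⟨hi, Finset.mem_univ i⟩)]
  linear_combination -h

lemma mk_X_zero_pow_mul_X_pow {i : Fin (k + 1)} (hi : i ≠ 0) (a : ℕ) {b : ℕ} (hb : b ≠ 0) :
    π (X 0) ^ a * π (X i) ^ b = (-1) ^ a * π (X i) ^ (a + b) := by
  obtain ⟨c, rfl⟩ := Nat.exists_eq_add_one_of_ne_zero hb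
  induction a with
  | zero => simp
  | succ a ih =>
    linear_combination
      π (X 0) * ih + (-1) ^ a * π (X i) ^ (a + c) * mk_X_zero_mul_X (R := R) (m := m) hi

lemma mk_X_zero_pow_pred_mul_X (hm : m ≠ 0) {i : Fin (k + 1)} (hi : i ≠ 0) :
    π (X 0) ^ (m - 1) * π (X i) = (-1) ^ (m - 1) * π (X i) ^ m := by
  simpa [Nat.sub_add_cancel (Nat.one_le_iff_ne_zero.2 hm)] using
    mk_X_zero_pow_mul_X_pow (R := R) (m := m) hi (m - 1) one_ne_zero

lemma mk_X_zero_pow_mul_X {i : Fin (k + 1)} (hi : i ≠ 0) :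
    π (X 0) ^ m * π (X i) = (0 : 𝒜) := by
  have h := congrArg (· * π (X i)) (mk_X_zero_pow_pred_mul_X_eq_sum hi)
  simp only [add_mul, Finset.sum_mul] at h
  rw [Finset.sum_eq_single i (fun j hj hji => by
      rw [mul_assoc, mk_X_mul_X (Finset.ne_of_mem_erase hj) hi hji, mul_zero])
    (by simp [hi])] at h
  linear_combination -h

lemma mk_X_pow_eq_zero (hk : 1 ≤ k) (hm : m ≠ 0) (i : Fin (k + 1)) {d : ℕ} (hd : m < d) :
    π (X i) ^ d = (0 : 𝒜) := by
  obtain ⟨e, rfl⟩ := Nat.exists_eq_add_of_le hd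
  rw [pow_add, pow_succ]
  suffices π (X i) ^ m * π (X i) = (0 : 𝒜) by rw [this, zero_mul]
  rcases eq_or_ne i 0 with rfl | hi
  · have h := congrArg (π (X 0) * ·) (mk_X_zero_pow_pred_mul_X_eq_sum (m := m)
      (one_ne_zero_of_one_le hk))
    simp only [mul_add, Finset.mul_sum, ← mul_assoc, ← pow_succ',
      Nat.sub_add_cancel (Nat.one_le_iff_ne_zero.2 hm)] at h
    rw [Finset.sum_eq_zero (fun j hj => mk_X_zero_pow_mul_X (Finset.ne_of_mem_erase hj)),
      mk_X_zero_pow_mul_X (one_ne_zero_of_one_le hk)] at h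
    linear_combination -h
  · have h := mk_X_zero_pow_mul_X_pow (R := R) (m := m) hi m one_ne_zero
    rw [pow_one, mk_X_zero_pow_mul_X hi] at h
    exact neg_one_pow_mul_eq_zero_iff.1 h.symm

lemma mk_X_pow_eq_mk_X_one_pow (hk : 1 ≤ k) (hm : m ≠ 0) {i : Fin (k + 1)} (hi : i ≠ 0) :
    π (X i) ^ m = (π (X 1) ^ m : 𝒜) := by
  have h1 := one_ne_zero_of_one_le hk
  have h := (mk_X_zero_pow_pred_mul_X_eq_sum (R := R) (m := m) hi).trans
    (mk_X_zero_pow_pred_mul_X_eq_sum h1).symm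
  rw [mk_X_zero_pow_pred_mul_X hm hi, mk_X_zero_pow_pred_mul_X hm h1, ← sub_eq_zero, ← mul_sub,
    neg_one_pow_mul_eq_zero_iff] at h
  exact sub_eq_zero.1 h

lemma mk_X_zero_pow (hk : 1 ≤ k) (hm : m ≠ 0) :
    π (X 0) ^ m = ((-1) ^ m * ((k : 𝒜) - 1) * π (X 1) ^ m : 𝒜) := by
  have h1 := one_ne_zero_of_one_le hk
  have h := mk_X_zero_pow_pred_mul_X_eq_sum (R := R) (m := m) h1
  have hterm : ∀ j ∈ Finset.univ.erase 0,
      π (X 0) ^ (m - 1) * π (X j) = (-1) ^ (m - 1) * (π (X 1) ^ m : 𝒜) := fun j hj => by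
    rw [mk_X_zero_pow_pred_mul_X hm (Finset.ne_of_mem_erase hj),
      mk_X_pow_eq_mk_X_one_pow hk hm (Finset.ne_of_mem_erase hj)]
  rw [Finset.sum_congr rfl hterm, Finset.sum_const, Finset.card_erase_of_mem (Finset.mem_univ _),
    Finset.card_univ, Fintype.card_fin, Nat.add_sub_cancel, nsmul_eq_mul,
    mk_X_zero_pow_pred_mul_X hm h1] at h
  obtain ⟨n, rfl⟩ := Nat.exists_eq_add_one_of_ne_zero hm
  rw [Nat.add_sub_cancel] at h
  linear_combination -h

lemma mk_monomial_of_isMixed {μ : Fin (k + 1) →₀ ℕ} (h : IsMixed μ) :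
    π (monomial μ (1 : R)) = 0 := by
  obtain ⟨i, j, hi, hj, hij, hμi, hμj⟩ := h
  have hle : Finsupp.single i 1 + Finsupp.single j 1 ≤ μ := Finsupp.le_def.2 fun l => by
    by_cases hli : l = i
    · subst hli; simp [Finsupp.single_eq_of_ne hij]; omega
    by_cases hlj : l = j
    · subst hlj; simp [Finsupp.single_eq_of_ne (Ne.symm hij)]; omega
    · simp [Finsupp.single_eq_of_ne hli, Finsupp.single_eq_of_ne hlj]
  obtain ⟨ν, rfl⟩ := exists_add_of_le hle
  rw [add_assoc, monomial_single_add, monomial_single_add, pow_one, pow_one, map_mul, map_mul,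
    ← mul_assoc, mk_X_mul_X hi hj hij, zero_mul]

end Relations

section NormalForm

variable (m) in
def topIndex (hk : 1 ≤ k) : BasisIndex m k := ⟨(1, m), Or.inr (Or.inr ⟨val_one_of_one_le hk, rfl⟩)⟩

-- The coordinates of `π (X i ^ d)` in the family `powers`, except for the junk value
-- `powCoords i 0 = 0` when `i ≠ 0`.
variable (R m) in
noncomputable def powCoords (hk : 1 ≤ k) (i : Fin (k + 1)) (d : ℕ) : BasisIndex m k →₀ R :=
  if h : (i = 0 ∧ d ≤ m - 1) ∨ (1 ≤ (i : ℕ) ∧ 1 ≤ d ∧ d ≤ m - 1) ∨ ((i : ℕ) = 1 ∧ d = m) then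
    Finsupp.single ⟨(i, d), h⟩ 1
  else if d = m then Finsupp.single (topIndex m hk) (if i = 0 then (-1) ^ m * ((k : R) - 1) else 1)
  else 0

lemma powCoords_basisIndex (hk : 1 ≤ k) (p : BasisIndex m k) :
    powCoords R m hk p.1.1 p.1.2 = Finsupp.single p 1 := by
  rw [powCoords, dif_pos p.2]

lemma powCoords_zero_self (hk : 1 ≤ k) (hm : m ≠ 0) :
    powCoords R m hk 0 m = Finsupp.single (topIndex m hk) ((-1) ^ m * ((k : R) - 1)) := by
  rw [powCoords, dif_neg (by simp; omega), if_pos rfl, if_pos rfl]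

lemma powCoords_self (hk : 1 ≤ k) {i : Fin (k + 1)} (hi : i ≠ 0) :
    powCoords R m hk i m = Finsupp.single (topIndex m hk) 1 := by
  by_cases hi1 : (i : ℕ) = 1
  · rw [powCoords, dif_pos (Or.inr (Or.inr ⟨hi1, rfl⟩))]
    obtain rfl : i = 1 := Fin.ext (hi1.trans (val_one_of_one_le hk).symm)
    rfl
  · rw [powCoords, dif_neg (by simp [hi1]; omega), if_pos rfl, if_neg hi]

lemma powCoords_of_lt (hk : 1 ≤ k) (i : Fin (k + 1)) {d : ℕ} (hd : m < d) :
    powCoords R m hk i d = (0 : BasisIndex m k →₀ R) := by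
  rw [powCoords, dif_neg (by omega), if_neg (by omega)]

lemma linearCombination_powCoords (hk : 1 ≤ k) (hm : m ≠ 0) {i : Fin (k + 1)} {d : ℕ}
    (hd : d = 0 → i = 0) :
    Finsupp.linearCombination R (powers R m k) (powCoords R m hk i d) = π (X i) ^ d := by
  rcases lt_trichotomy m d with hlt | rfl | hlt
  · rw [powCoords_of_lt hk i hlt, map_zero, mk_X_pow_eq_zero hk hm i hlt]
  · rcases eq_or_ne i 0 with rfl | hi
    · rw [powCoords_zero_self hk hm, Finsupp.linearCombination_single, mk_X_zero_pow hk hm]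
      refine (Algebra.smul_def (A := 𝒜) _ _).trans ?_
      simp [powers, topIndex]
    · rw [powCoords_self hk hi, Finsupp.linearCombination_single, one_smul,
        mk_X_pow_eq_mk_X_one_pow hk hm hi, powers, topIndex]
  · have h : (i = 0 ∧ d ≤ m - 1) ∨ (1 ≤ (i : ℕ) ∧ 1 ≤ d ∧ d ≤ m - 1) ∨ ((i : ℕ) = 1 ∧ d = m) := by
      by_cases hi : i = 0
      · exact Or.inl ⟨hi, by omega⟩
      · exact Or.inr (Or.inl ⟨one_le_val_iff.2 hi, by have := mt hd hi; omega, by omega⟩)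
    rw [powCoords, dif_pos h, Finsupp.linearCombination_single, one_smul, powers]

variable (R m) in
open Classical in
noncomputable def monomialCoords (hk : 1 ≤ k) (μ : Fin (k + 1) →₀ ℕ) : BasisIndex m k →₀ R :=
  if IsMixed μ then 0
  else if h : ∃ i, i ≠ 0 ∧ μ i ≠ 0 then
    (-1 : R) ^ μ 0 • powCoords R m hk h.choose (μ 0 + μ h.choose)
  else powCoords R m hk 0 (μ 0)

lemma monomialCoords_of_isMixed (hk : 1 ≤ k) {μ : Fin (k + 1) →₀ ℕ} (h : IsMixed μ) :
    monomialCoords R m hk μ = 0 := by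
  classical
  rw [monomialCoords, if_pos h]

lemma monomialCoords_single_zero (hk : 1 ≤ k) (a : ℕ) :
    monomialCoords R m hk (Finsupp.single 0 a) = powCoords R m hk 0 a := by
  have hV : ∀ i, i ≠ 0 → Finsupp.single (0 : Fin (k + 1)) a i = 0 := fun i hi =>
    Finsupp.single_eq_of_ne hi
  classical
  rw [monomialCoords, if_neg fun ⟨i, _, hi, _, _, hμi, _⟩ => hμi (hV i hi),
    dif_neg fun ⟨i, hi, hμi⟩ => hμi (hV i hi), Finsupp.single_eq_same]

lemma monomialCoords_single_add_single (hk : 1 ≤ k) {i : Fin (k + 1)} (hi : i ≠ 0) (a : ℕ)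
    {b : ℕ} (hb : b ≠ 0) :
    monomialCoords R m hk (Finsupp.single 0 a + Finsupp.single i b) =
      (-1 : R) ^ a • powCoords R m hk i (a + b) := by
  set μ := Finsupp.single 0 a + Finsupp.single i b
  have hμ : ∀ j, j ≠ 0 → μ j ≠ 0 → j = i := fun j hj hμj => by
    by_contra hji
    simp [μ, Ne.symm hj, Ne.symm hji] at hμj
  have hμi : μ i = b := by simp [μ, hi]
  have hμ0 : μ 0 = a := by simp [μ, hi]
  have hex : ∃ j, j ≠ 0 ∧ μ j ≠ 0 := ⟨i, hi, hμi ▸ hb⟩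
  classical
  rw [monomialCoords, if_neg fun ⟨j, l, hj, hl, hjl, hμj, hμl⟩ =>
      hjl ((hμ j hj hμj).trans (hμ l hl hμl).symm), dif_pos hex,
    hμ _ hex.choose_spec.1 hex.choose_spec.2, hμi, hμ0]

lemma monomialCoords_eq_zero_of_lt_degree (hk : 1 ≤ k) {μ : Fin (k + 1) →₀ ℕ}
    (hμ : m < μ.degree) : monomialCoords R m hk μ = 0 := by
  rcases isMixed_or_eq_single_add_single_or_eq_single μ with h | ⟨i, a, b, hi, hb, rfl⟩ | h
  · exact monomialCoords_of_isMixed hk h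
  · simp only [map_add, Finsupp.degree_single] at hμ
    rw [monomialCoords_single_add_single hk hi a hb, powCoords_of_lt hk i hμ, smul_zero]
  · rw [h, Finsupp.degree_single] at hμ
    rw [h, monomialCoords_single_zero, powCoords_of_lt hk 0 hμ]

lemma monomialCoords_add_X_mul_X (hk : 1 ≤ k) {i j : Fin (k + 1)} (hi : i ≠ 0) (hj : j ≠ 0)
    (hij : i ≠ j) (μ : Fin (k + 1) →₀ ℕ) :
    monomialCoords R m hk (μ + Finsupp.single i 1 + Finsupp.single j 1) = 0 :=
  monomialCoords_of_isMixed hk ⟨i, j, hi, hj, hij, by simp, by simp⟩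

lemma monomialCoords_add_sq_relation (hk : 1 ≤ k) {i : Fin (k + 1)} (hi : i ≠ 0)
    (μ : Fin (k + 1) →₀ ℕ) :
    monomialCoords R m hk (μ + Finsupp.single i 2) +
      monomialCoords R m hk (μ + Finsupp.single 0 1 + Finsupp.single i 1) = 0 := by
  rcases eq_single_add_single_or_exists hi μ with hμ | ⟨j, hj, hji, hμj⟩
  · obtain ⟨a, b, rfl⟩ : ∃ a b, μ = Finsupp.single 0 a + Finsupp.single i b := ⟨_, _, hμ⟩
    have h₁ : Finsupp.single 0 a + Finsupp.single i b + Finsupp.single i 2 =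
        Finsupp.single 0 a + Finsupp.single i (b + 2) := by
      rw [Finsupp.single_add i b 2, add_assoc]
    have h₂ : Finsupp.single 0 a + Finsupp.single i b + Finsupp.single 0 1 + Finsupp.single i 1 =
        Finsupp.single 0 (a + 1) + Finsupp.single i (b + 1) := by
      rw [Finsupp.single_add, Finsupp.single_add]; abel
    rw [h₁, h₂, monomialCoords_single_add_single hk hi _ (by omega),
      monomialCoords_single_add_single hk hi _ (by omega),
      show a + 1 + (b + 1) = a + (b + 2) by omega, pow_succ, mul_neg_one, neg_smul, add_neg_cancel]
  · rw [monomialCoords_of_isMixed hk ⟨i, j, hi, hj, Ne.symm hji, by simp, by simp [hji, hμj]⟩,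
      monomialCoords_of_isMixed hk ⟨i, j, hi, hj, Ne.symm hji, by simp, by simp [hji, hj, hμj]⟩,
      add_zero]

lemma monomialCoords_add_sum_relation (hk : 1 ≤ k) (hm : m ≠ 0) {i : Fin (k + 1)} (hi : i ≠ 0)
    (μ : Fin (k + 1) →₀ ℕ) :
    monomialCoords R m hk (μ + Finsupp.single 0 m) +
      ∑ j ∈ (Finset.univ.erase 0).erase i,
        monomialCoords R m hk (μ + Finsupp.single 0 (m - 1) + Finsupp.single j 1) = 0 := by
  rcases eq_or_ne μ 0 with rfl | hμ
  · have hterm : ∀ j ∈ (Finset.univ.erase 0).erase i,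
        monomialCoords R m hk (0 + Finsupp.single 0 (m - 1) + Finsupp.single j 1) =
          Finsupp.single (topIndex m hk) ((-1) ^ (m - 1)) := fun j hj => by
      rw [zero_add, monomialCoords_single_add_single hk
        (Finset.ne_of_mem_erase (Finset.mem_of_mem_erase hj)) _ one_ne_zero,
        Nat.sub_add_cancel (Nat.one_le_iff_ne_zero.2 hm),
        powCoords_self hk (Finset.ne_of_mem_erase (Finset.mem_of_mem_erase hj)),
        Finsupp.smul_single, smul_eq_mul, mul_one]
    rw [Finset.sum_congr rfl hterm, zero_add, monomialCoords_single_zero, powCoords_zero_self hk hm,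
      ← Finsupp.single_finsetSum, ← Finsupp.single_add, Finsupp.single_eq_zero, Finset.sum_const,
      Finset.card_erase_of_mem (Finset.mem_erase.2 ⟨hi, Finset.mem_univ i⟩),
      Finset.card_erase_of_mem (Finset.mem_univ 0), Finset.card_univ, Fintype.card_fin,
      Nat.add_sub_cancel, nsmul_eq_mul, Nat.cast_sub hk]
    obtain ⟨n, rfl⟩ := Nat.exists_eq_add_one_of_ne_zero hm
    rw [Nat.add_sub_cancel]
    ring
  · have hdeg : μ.degree ≠ 0 := (Finsupp.degree_eq_zero_iff μ).not.2 hμ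
    rw [monomialCoords_eq_zero_of_lt_degree hk
        (by simp only [map_add, Finsupp.degree_single]; omega),
      Finset.sum_eq_zero fun j _ => monomialCoords_eq_zero_of_lt_degree hk
        (by simp only [map_add, Finsupp.degree_single]; omega), add_zero]

variable (R m) in
noncomputable def coords (hk : 1 ≤ k) :
    MvPolynomial (Fin (k + 1)) R →ₗ[R] (BasisIndex m k →₀ R) :=
  (basisMonomials (Fin (k + 1)) R).constr R (monomialCoords R m hk)

lemma coords_monomial (hk : 1 ≤ k) (μ : Fin (k + 1) →₀ ℕ) :
    coords R m hk (monomial μ 1) = monomialCoords R m hk μ := by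
  simpa [coords, coe_basisMonomials] using
    (basisMonomials (Fin (k + 1)) R).constr_basis R (monomialCoords R m hk) μ

lemma coords_mul_relation (hk : 1 ≤ k) (hm : m ≠ 0) {g : MvPolynomial (Fin (k + 1)) R}
    (hg : g ∈ relations R m k) (q : MvPolynomial (Fin (k + 1)) R) : coords R m hk (q * g) = 0 := by
  suffices (coords R m hk).comp (LinearMap.mulRight R g) = 0 from LinearMap.congr_fun this q
  refine (basisMonomials _ R).ext fun μ => ?_
  simp only [coe_basisMonomials, LinearMap.comp_apply, LinearMap.mulRight_apply,
    LinearMap.zero_apply]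
  rcases hg with (⟨i, j, hi, hij, rfl⟩ | ⟨i, hi, rfl⟩) | ⟨i, hi, rfl⟩
  · rw [show monomial μ 1 * (X i * X j) =
        monomial (μ + Finsupp.single i 1 + Finsupp.single j 1) (1 : R) by
      rw [monomial_add_single, monomial_add_single, pow_one, pow_one, mul_assoc], coords_monomial]
    exact monomialCoords_add_X_mul_X hk (one_le_val_iff.1 hi) (one_le_val_iff.1 (by omega))
      (Fin.ne_of_lt hij) μ
  · rw [show monomial μ 1 * (X i ^ 2 + X 0 * X i) =
        monomial (μ + Finsupp.single i 2) (1 : R) +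
          monomial (μ + Finsupp.single 0 1 + Finsupp.single i 1) 1 by
      rw [monomial_add_single, monomial_add_single, monomial_add_single, pow_one, pow_one]; ring,
      map_add, coords_monomial, coords_monomial]
    exact monomialCoords_add_sq_relation hk (one_le_val_iff.1 hi) μ
  · have e : ∀ j, monomial μ (1 : R) * (X 0 ^ (m - 1) * X j) =
        monomial (μ + Finsupp.single 0 (m - 1) + Finsupp.single j 1) 1 := fun j => by
      rw [monomial_add_single, monomial_add_single, pow_one, mul_assoc]
    rw [filter_ne_eq_erase_erase, mul_add, Finset.mul_sum, ← monomial_add_single, map_add,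
      map_sum, coords_monomial]
    simp only [e, coords_monomial]
    exact monomialCoords_add_sum_relation hk hm (one_le_val_iff.1 hi) μ

lemma coords_eq_zero_of_mem (hk : 1 ≤ k) (hm : m ≠ 0) {x : MvPolynomial (Fin (k + 1)) R}
    (hx : x ∈ Ideal.span (relations R m k)) : coords R m hk x = 0 := by
  suffices ∀ q, coords R m hk (q * x) = 0 by simpa using this 1
  induction hx using Submodule.span_induction with
  | mem g hg => exact coords_mul_relation hk hm hg
  | zero => simp
  | add a b _ _ ha hb => simp [mul_add, ha, hb]
  | smul r a _ ha => exact fun q => by rw [smul_eq_mul, ← mul_assoc, ha]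

lemma monomialCoords_single (hk : 1 ≤ k) {i : Fin (k + 1)} {d : ℕ} (hd : d = 0 → i = 0) :
    monomialCoords R m hk (Finsupp.single i d) = powCoords R m hk i d := by
  rcases eq_or_ne i 0 with rfl | hi
  · exact monomialCoords_single_zero hk d
  · simpa using monomialCoords_single_add_single (R := R) (m := m) hk hi 0 (mt hd hi)

end NormalForm

variable (R m) in
noncomputable def quotCoords (hk : 1 ≤ k) (hm : m ≠ 0) : 𝒜 →ₗ[R] (BasisIndex m k →₀ R) :=
  ((Ideal.span (relations R m k)).restrictScalars R).liftQ (coords R m hk)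
    (fun _ hx => coords_eq_zero_of_mem hk hm hx) ∘ₗ
  (Submodule.Quotient.restrictScalarsEquiv R _).symm.toLinearMap

lemma quotCoords_mk (hk : 1 ≤ k) (hm : m ≠ 0) (x : MvPolynomial (Fin (k + 1)) R) :
    quotCoords R m hk hm (π x) = coords R m hk x :=
  rfl

theorem linearIndependent_powers (hk : 1 ≤ k) (hm : m ≠ 0) :
    LinearIndependent R (powers R m k) := by
  refine LinearIndependent.of_comp (quotCoords R m hk hm) ?_
  convert (Finsupp.basisSingleOne : Module.Basis (BasisIndex m k) R _).linearIndependent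
  ext1 p
  rw [Finsupp.coe_basisSingleOne, Function.comp_apply, powers, ← map_pow, quotCoords_mk,
    X_pow_eq_monomial, coords_monomial, monomialCoords_single hk, powCoords_basisIndex]
  rcases p with ⟨⟨i, d⟩, h | h | h⟩ <;> intro hd <;> simp only at hd ⊢
  · exact h.1
  · omega
  · omega

lemma mk_monomial (hk : 1 ≤ k) (hm : m ≠ 0) (μ : Fin (k + 1) →₀ ℕ) :
    π (monomial μ 1) = Finsupp.linearCombination R (powers R m k) (monomialCoords R m hk μ) := by
  rcases isMixed_or_eq_single_add_single_or_eq_single μ with h | ⟨i, a, b, hi, hb, rfl⟩ | h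
  · rw [monomialCoords_of_isMixed hk h, map_zero, mk_monomial_of_isMixed h]
  · rw [monomialCoords_single_add_single hk hi a hb, map_smul,
      linearCombination_powCoords hk hm fun h => absurd h (by omega), monomial_single_add,
      ← X_pow_eq_monomial, map_mul, map_pow, map_pow, mk_X_zero_pow_mul_X_pow hi a hb]
    refine Eq.trans ?_ (Algebra.smul_def (A := 𝒜) _ _).symm
    simp
  · rw [h, monomialCoords_single_zero, linearCombination_powCoords hk hm fun _ => rfl, ← map_pow,
      X_pow_eq_monomial]

theorem top_le_span_powers (hk : 1 ≤ k) (hm : m ≠ 0) :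
    ⊤ ≤ Submodule.span R (Set.range (powers R m k)) := by
  rintro x -
  obtain ⟨q, rfl⟩ := Ideal.Quotient.mk_surjective x
  have h : (Ideal.Quotient.mkₐ R (Ideal.span (relations R m k))).toLinearMap =
      Finsupp.linearCombination R (powers R m k) ∘ₗ coords R m hk :=
    (basisMonomials _ R).ext fun μ => by
      simpa [coe_basisMonomials, coords_monomial] using mk_monomial hk hm μ
  rw [← Finsupp.range_linearCombination]
  exact ⟨coords R m hk q, (LinearMap.congr_fun h q).symm⟩

end PolygonSpace

/-- Proposition 2.4: the cohomology ring `H*(N_{n,k})` of the polygon space with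
genetic code `{{n,k}}`, where `m = n-3`.  Variables: `X 0 = R`, `X i = Vᵢ` for
`1 ≤ i ≤ k`.  The quotient `A` of `ℤ[R,V₁,…,V_k]` by the relations
`VᵢVⱼ = 0` (`i ≠ j`), `Vᵢ² + RVᵢ = 0`, and `R^m + ∑_{j≠i} R^{m-1}Vⱼ = 0`
(`1 ≤ i ≤ k`) is free abelian with basis
`{1} ∪ {R^j : 1 ≤ j ≤ m-1} ∪ {Vᵢ^j : 1 ≤ i ≤ k, 1 ≤ j ≤ m-1} ∪ {V₁^m}`,
and in `A`: `V₁^m = ⋯ = V_k^m`, `R^m = (-1)^m (k-1) V₁^m`,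
`R^{m+1} = 0 = Vᵢ^{m+1}`. -/
theorem stmt_12 (m k : ℕ) (hm : 2 ≤ m) (hk : 1 ≤ k)
    (I : Ideal (MvPolynomial (Fin (k + 1)) ℤ))
    (hI : I = Ideal.span
      ({f | ∃ i j : Fin (k + 1), 1 ≤ (i : ℕ) ∧ (i : ℕ) < (j : ℕ) ∧ f = X i * X j} ∪
       {f | ∃ i : Fin (k + 1), 1 ≤ (i : ℕ) ∧ f = X i ^ 2 + X 0 * X i} ∪
       {f | ∃ i : Fin (k + 1), 1 ≤ (i : ℕ) ∧
          f = X 0 ^ m + ∑ j ∈ Finset.univ.filter (fun j : Fin (k + 1) =>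
            1 ≤ (j : ℕ) ∧ j ≠ i), X 0 ^ (m - 1) * X j})) :
    (∃ b : Module.Basis
        {p : Fin (k + 1) × ℕ //
          (p.1 = 0 ∧ p.2 ≤ m - 1) ∨
          (1 ≤ (p.1 : ℕ) ∧ 1 ≤ p.2 ∧ p.2 ≤ m - 1) ∨
          ((p.1 : ℕ) = 1 ∧ p.2 = m)} ℤ (MvPolynomial (Fin (k + 1)) ℤ ⧸ I),
      ∀ p, b p = Ideal.Quotient.mk I (X p.1.1) ^ p.1.2) ∧
    (∀ i : Fin (k + 1), 1 ≤ (i : ℕ) →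
      Ideal.Quotient.mk I (X i) ^ m = Ideal.Quotient.mk I (X 1) ^ m) ∧
    Ideal.Quotient.mk I (X 0) ^ m =
      (-1) ^ m * ((k : MvPolynomial (Fin (k + 1)) ℤ ⧸ I) - 1) *
        Ideal.Quotient.mk I (X 1) ^ m ∧
    Ideal.Quotient.mk I (X 0) ^ (m + 1) = 0 ∧
    ∀ i : Fin (k + 1), 1 ≤ (i : ℕ) → Ideal.Quotient.mk I (X i) ^ (m + 1) = 0 := by
  subst hI
  have hm' : m ≠ 0 := by omega
  open PolygonSpace in
  exact ⟨⟨Module.Basis.mk (linearIndependent_powers hk hm') (top_le_span_powers hk hm'),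
      fun p => Module.Basis.mk_apply _ _ _⟩,
    fun i hi => mk_X_pow_eq_mk_X_one_pow hk hm' (one_le_val_iff.1 hi),
    mk_X_zero_pow hk hm',
    mk_X_pow_eq_zero hk hm' 0 m.lt_succ_self,
    fun i _ => mk_X_pow_eq_zero hk hm' i m.lt_succ_self⟩
end

section
/- Let m ≥ 2 and k ≥ 1 be integers. Let B be the quotient of the polynomial ring ℤ[α₁,…,α_k, β] by the ideal generated by: (i) α_iα_j for all 1 ≤ i < j ≤ k; (ii) α_iβ + α_i²β + α_i² for all 1 ≤ i ≤ k (the polynomial form of α_iβ = −α_i²/(1+α_i)); (iii) α_i^m − α_1^m for all 2 ≤ i ≤ k; (iv) β^m − (−1)^m(k−1)α_1^m; (v) β^{m+1}; and (vi) α_1^{m+1}. Then B is a free abelian group with basis {1} ∪ {α_1^j : 1 ≤ j ≤ m} ∪ {α_i^j : 2 ≤ i ≤ k, 1 ≤ j ≤ m−1} ∪ {β^j : 1 ≤ j ≤ m−1}. -/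
/-!
Write `β = X 0` and `αᵢ = X i` (`1 ≤ i ≤ k`) in the quotient `B`.

Spanning: in `B` we have `αᵢαⱼ = 0`, `αᵢ^(m+1) = 0 = β^(m+1)`, `αᵢ^m = α₁^m`, and
`αᵢ^(e+1) β^(b+1) = -αᵢ^(e+2) β^(b+1) - αᵢ^(e+2) β^b`, which pushes every mixed monomial,
by downward induction on the `α`-exponent, into the span of pure powers. So the span of the
proposed basis is stable under multiplication by every generator, hence is all of `B`.

Independence: evaluate in `k + 1` copies of `ℤ⟦X⟧`. In copy `0`, `β ↦ X` and every `αᵢ ↦ 0`;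
in copy `c ≥ 1`, `α_c ↦ X`, `β ↦ -X/(1+X)` and the other `αᵢ ↦ 0`. The polynomials that vanish
to order `m` in every copy and whose `X^m`-coefficients satisfy one fixed linear relation form
an ideal containing all the relations. On the proposed basis, the coefficients of `X^j`
(`j < m`) in the copies together with that weighted `X^m`-coefficient form a unitriangular
system: only the powers of `β` leak into the copies `c ≥ 1`.
-/

theorem PowerSeries.coeff_mul_of_X_pow_dvd {R : Type*} [CommSemiring R] {n : ℕ}
    {f g : PowerSeries R} (hg : X ^ n ∣ g) : coeff n (f * g) = constantCoeff f * coeff n g := by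
  obtain ⟨g, rfl⟩ := hg
  have coeff_X_pow_mul (h : PowerSeries R) : coeff n (X ^ n * h) = constantCoeff h := by
    simpa using coeff_X_pow_mul h n 0
  rw [mul_left_comm, coeff_X_pow_mul, coeff_X_pow_mul, map_mul]

open MvPolynomial

noncomputable section

namespace PolygonSpaceKTheory

variable (m k : ℕ)

def relations : Set (MvPolynomial (Fin (k + 1)) ℤ) :=
  {f | ∃ i j : Fin (k + 1), 1 ≤ (i : ℕ) ∧ (i : ℕ) < (j : ℕ) ∧ f = X i * X j} ∪
  {f | ∃ i : Fin (k + 1), 1 ≤ (i : ℕ) ∧ f = X i * X 0 + X i ^ 2 * X 0 + X i ^ 2} ∪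
  {f | ∃ i : Fin (k + 1), 2 ≤ (i : ℕ) ∧ f = X i ^ m - X 1 ^ m} ∪
  {X 0 ^ m - C ((-1) ^ m * ((k : ℤ) - 1)) * X 1 ^ m} ∪
  {X 0 ^ (m + 1)} ∪ {X 1 ^ (m + 1)}

abbrev KRing := MvPolynomial (Fin (k + 1)) ℤ ⧸ Ideal.span (relations m k)

abbrev BasisIndex := {p : Fin (k + 1) × ℕ //
  (p.1 = 0 ∧ p.2 ≤ m - 1) ∨
  ((p.1 : ℕ) = 1 ∧ 1 ≤ p.2 ∧ p.2 ≤ m) ∨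
  (2 ≤ (p.1 : ℕ) ∧ 1 ≤ p.2 ∧ p.2 ≤ m - 1)}

def gen (a : Fin (k + 1)) : KRing m k := Ideal.Quotient.mk _ (X a)

def monomialFamily (p : BasisIndex m k) : KRing m k := gen m k p.1.1 ^ p.1.2

lemma val_one_of_one_le {k : ℕ} (hk : 1 ≤ k) : ((1 : Fin (k + 1)) : ℕ) = 1 := by
  rw [Fin.val_one', Nat.mod_eq_of_lt (by omega)]

lemma one_le_val_iff {k : ℕ} {i : Fin (k + 1)} : 1 ≤ (i : ℕ) ↔ i ≠ 0 :=
  Nat.one_le_iff_ne_zero.trans Fin.val_ne_zero_iff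

lemma one_ne_zero_of_one_le {k : ℕ} (hk : 1 ≤ k) : (1 : Fin (k + 1)) ≠ 0 := by
  rw [← one_le_val_iff, val_one_of_one_le hk]

variable {m k} in
lemma BasisIndex.snd_ne_zero (q : BasisIndex m k) (hq : q.1.1 ≠ 0) : q.1.2 ≠ 0 := by
  rcases q.2 with ⟨h, -⟩ | ⟨-, h, -⟩ | ⟨-, h, -⟩
  · exact absurd h hq
  all_goals omega

variable {m k} in
lemma BasisIndex.eq_top_of_le (hm : m ≠ 0) (hk : 1 ≤ k) (q : BasisIndex m k) (hq : m ≤ q.1.2) :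
    q.1.1 = 1 ∧ q.1.2 = m := by
  rcases q.2 with ⟨-, h⟩ | ⟨h1, -, h⟩ | ⟨-, -, h⟩
  · omega
  · exact ⟨Fin.ext (by rw [h1, val_one_of_one_le hk]), by omega⟩
  · omega

section Relations

variable {m k}

lemma mk_eq_zero_of_mem_relations {g : MvPolynomial (Fin (k + 1)) ℤ} (hg : g ∈ relations m k) :
    Ideal.Quotient.mk (Ideal.span (relations m k)) g = 0 :=
  Ideal.Quotient.eq_zero_iff_mem.2 (Ideal.subset_span hg)

lemma gen_mul_gen_of_ne {i j : Fin (k + 1)} (hi : i ≠ 0) (hj : j ≠ 0) (hij : i ≠ j) :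
    gen m k i * gen m k j = 0 := by
  wlog hlt : i < j generalizing i j
  · rw [mul_comm]; exact this hj hi hij.symm (lt_of_le_of_ne (not_lt.1 hlt) hij.symm)
  rw [gen, gen, ← map_mul]
  exact mk_eq_zero_of_mem_relations (by
    unfold relations; left; left; left; left; left; exact ⟨i, j, one_le_val_iff.2 hi, hlt, rfl⟩)

lemma gen_mul_gen_zero_add {i : Fin (k + 1)} (hi : i ≠ 0) :
    gen m k i * gen m k 0 + gen m k i ^ 2 * gen m k 0 + gen m k i ^ 2 = 0 := by
  simp only [gen, ← map_mul, ← map_pow, ← map_add]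
  exact mk_eq_zero_of_mem_relations (by
    unfold relations; left; left; left; left; right; exact ⟨i, one_le_val_iff.2 hi, rfl⟩)

lemma gen_pow_eq_gen_one_pow (hk : 1 ≤ k) {i : Fin (k + 1)} (hi : i ≠ 0) :
    gen m k i ^ m = gen m k 1 ^ m := by
  rcases eq_or_ne i 1 with rfl | hi1
  · rfl
  rw [← sub_eq_zero]
  simp only [gen, ← map_pow, ← map_sub]
  refine mk_eq_zero_of_mem_relations ?_
  unfold relations; left; left; left; right
  refine ⟨i, ?_, rfl⟩
  have := one_le_val_iff.2 hi
  have : (i : ℕ) ≠ 1 := fun h => hi1 (Fin.ext (by rw [h, val_one_of_one_le hk]))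
  omega

lemma gen_zero_pow : gen m k 0 ^ m = ((-1) ^ m * ((k : ℤ) - 1)) • gen m k 1 ^ m := by
  have h := mk_eq_zero_of_mem_relations (m := m) (k := k)
    (g := X 0 ^ m - C ((-1) ^ m * ((k : ℤ) - 1)) * X 1 ^ m)
    (by unfold relations; left; left; right; exact Set.mem_singleton _)
  rwa [map_sub, map_mul, map_pow, map_pow, eq_intCast C, map_intCast, ← zsmul_eq_mul,
    sub_eq_zero] at h

lemma gen_zero_pow_succ : gen m k 0 ^ (m + 1) = 0 := by
  rw [gen, ← map_pow]
  exact mk_eq_zero_of_mem_relations (by unfold relations; left; right; exact Set.mem_singleton _)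

lemma gen_one_pow_succ : gen m k 1 ^ (m + 1) = 0 := by
  rw [gen, ← map_pow]
  exact mk_eq_zero_of_mem_relations (by unfold relations; right; exact Set.mem_singleton _)

lemma gen_pow_succ (hm : m ≠ 0) (hk : 1 ≤ k) {i : Fin (k + 1)} (hi : i ≠ 0) :
    gen m k i ^ (m + 1) = 0 := by
  rcases eq_or_ne i 1 with rfl | hi1
  · exact gen_one_pow_succ
  have h10 := one_ne_zero_of_one_le hk
  calc gen m k i ^ (m + 1) = gen m k i * (gen m k 1 * gen m k 1 ^ (m - 1)) := by
        rw [pow_succ', gen_pow_eq_gen_one_pow hk hi, ← pow_succ',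
          Nat.sub_add_cancel (Nat.one_le_iff_ne_zero.2 hm)]
    _ = 0 := by rw [← mul_assoc, gen_mul_gen_of_ne hi h10 hi1, zero_mul]

lemma gen_pow_eq_zero (hm : m ≠ 0) (hk : 1 ≤ k) {i : Fin (k + 1)} {e : ℕ} (he : m < e) :
    gen m k i ^ e = 0 := by
  obtain ⟨d, rfl⟩ := Nat.exists_eq_add_of_lt he
  rw [add_assoc, add_comm d, ← add_assoc, pow_add]
  rcases eq_or_ne i 0 with rfl | hi
  · rw [gen_zero_pow_succ, zero_mul]
  · rw [gen_pow_succ hm hk hi, zero_mul]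

lemma gen_pow_succ_mul_gen_zero_pow_succ {i : Fin (k + 1)} (hi : i ≠ 0) (e b : ℕ) :
    gen m k i ^ (e + 1) * gen m k 0 ^ (b + 1) =
      -(gen m k i ^ (e + 2) * gen m k 0 ^ (b + 1)) - gen m k i ^ (e + 2) * gen m k 0 ^ b := by
  linear_combination (gen m k i ^ e * gen m k 0 ^ b) * gen_mul_gen_zero_add hi

end Relations

section Spanning

variable {m k}

local notation "S" => Submodule.span ℤ (Set.range (monomialFamily m k))

lemma gen_pow_mem_span (hm : m ≠ 0) (hk : 1 ≤ k) {i : Fin (k + 1)} (hi : i ≠ 0) {e : ℕ}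
    (he : e ≠ 0) : gen m k i ^ e ∈ S := by
  have hi1 := one_le_val_iff.2 hi
  rcases lt_trichotomy e m with hlt | rfl | hgt
  · exact Submodule.subset_span ⟨⟨(i, e), by dsimp only; omega⟩, rfl⟩
  · rw [gen_pow_eq_gen_one_pow hk hi]
    exact Submodule.subset_span
      ⟨⟨(1, e), Or.inr (Or.inl ⟨val_one_of_one_le hk, by omega, le_rfl⟩)⟩, rfl⟩
  · rw [gen_pow_eq_zero hm hk hgt]
    exact zero_mem _

lemma gen_zero_pow_mem_span (hm : m ≠ 0) (hk : 1 ≤ k) (b : ℕ) : gen m k 0 ^ b ∈ S := by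
  rcases lt_trichotomy b m with hlt | rfl | hgt
  · exact Submodule.subset_span ⟨⟨(0, b), Or.inl ⟨rfl, by omega⟩⟩, rfl⟩
  · rw [gen_zero_pow]
    have h10 := one_ne_zero_of_one_le hk
    exact Submodule.smul_mem _ _ (gen_pow_mem_span hm hk h10 hm)
  · rw [gen_pow_eq_zero hm hk hgt]
    exact zero_mem _

lemma gen_pow_mul_gen_zero_pow_mem_span (hm : m ≠ 0) (hk : 1 ≤ k) (i : Fin (k + 1))
    (e b : ℕ) :    gen m k i ^ e * gen m k 0 ^ b ∈ S := by
  rcases eq_or_ne i 0 with rfl | hi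
  · rw [← pow_add]
    exact gen_zero_pow_mem_span hm hk _
  rcases e with _ | e
  · rw [pow_zero, one_mul]
    exact gen_zero_pow_mem_span hm hk _
  induction b generalizing e with
  | zero => simpa using gen_pow_mem_span hm hk hi (Nat.succ_ne_zero e)
  | succ b ihb =>
    -- downward induction on the exponent of `gen i`, which vanishes beyond `m`
    suffices h : ∀ n e, m < e + n → gen m k i ^ (e + 1) * gen m k 0 ^ (b + 1) ∈ S from
      h (m + 1) e (by omega)
    intro n
    induction n with
    | zero =>
      intro e he
      rw [gen_pow_eq_zero hm hk (by omega), zero_mul]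
      exact zero_mem _
    | succ n ihn =>
      intro e he
      rw [gen_pow_succ_mul_gen_zero_pow_succ hi]
      exact sub_mem (neg_mem (ihn (e + 1) (by omega))) (ihb (e + 1))

lemma monomialFamily_mul_gen_mem_span (hm : m ≠ 0) (hk : 1 ≤ k) (p : BasisIndex m k)
    (a : Fin (k + 1)) : monomialFamily m k p * gen m k a ∈ S := by
  obtain ⟨⟨i, j⟩, hp⟩ := p
  simp only [monomialFamily]
  rcases eq_or_ne a 0 with rfl | ha
  · simpa using gen_pow_mul_gen_zero_pow_mem_span hm hk i j 1
  rcases eq_or_ne i 0 with rfl | hi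
  · simpa [mul_comm] using gen_pow_mul_gen_zero_pow_mem_span hm hk a 1 j
  rcases eq_or_ne i a with rfl | hia
  · simpa [← pow_succ] using gen_pow_mul_gen_zero_pow_mem_span hm hk i (j + 1) 0
  have hj : j = j - 1 + 1 := by have := one_le_val_iff.2 hi; dsimp only at hp; omega
  rw [hj, pow_succ, mul_assoc, gen_mul_gen_of_ne hi ha hia, mul_zero]
  exact zero_mem _

lemma mul_gen_mem_span (hm : m ≠ 0) (hk : 1 ≤ k) {x : KRing m k} (hx : x ∈ S)
    (a : Fin (k + 1)) : x * gen m k a ∈ S := by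
  induction hx using Submodule.span_induction with
  | mem y hy =>
    obtain ⟨q, rfl⟩ := hy
    exact monomialFamily_mul_gen_mem_span hm hk q a
  | zero => rw [zero_mul]; exact zero_mem _
  | add y z _ _ hy hz => rw [add_mul]; exact add_mem hy hz
  | smul r y _ hy => rw [smul_mul_assoc]; exact Submodule.smul_mem _ _ hy

lemma span_monomialFamily_eq_top (hm : m ≠ 0) (hk : 1 ≤ k) : S = ⊤ := by
  rw [eq_top_iff]
  rintro x -
  obtain ⟨p, rfl⟩ := Ideal.Quotient.mk_surjective x
  induction p using MvPolynomial.induction_on with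
  | C r =>
    rw [eq_intCast C, map_intCast, ← zsmul_one]
    exact Submodule.smul_mem _ _
      (Submodule.subset_span ⟨⟨(0, 0), Or.inl ⟨rfl, by omega⟩⟩, pow_zero _⟩)
  | add p q hp hq => rw [map_add]; exact add_mem hp hq
  | mul_X p a hp => rw [map_mul]; exact mul_gen_mem_span hm hk hp a

end Spanning

section Model

open PowerSeries (coeff constantCoeff invUnitsSub)

variable {m k}

-- `invUnitsSub (-1) = -1 / (1 + X)`
def slotGen (c a : Fin (k + 1)) : PowerSeries ℤ :=
  if a = 0 then (if c = 0 then PowerSeries.X else PowerSeries.X * invUnitsSub (-1))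
  else if a = c then PowerSeries.X else 0

def slotEval (c : Fin (k + 1)) : MvPolynomial (Fin (k + 1)) ℤ →ₐ[ℤ] PowerSeries ℤ :=
  aeval (slotGen c)

lemma X_dvd_slotGen (c a : Fin (k + 1)) : PowerSeries.X ∣ slotGen c a := by
  unfold slotGen
  split_ifs <;> simp

lemma X_pow_dvd_slotEval_X_pow (c a : Fin (k + 1)) (n : ℕ) :
    PowerSeries.X ^ n ∣ slotEval c (X a ^ n) := by
  rw [map_pow, slotEval, aeval_X]
  exact pow_dvd_pow_of_dvd (X_dvd_slotGen c a) n

lemma slotEval_X_pow {a : Fin (k + 1)} (ha : a ≠ 0) {n : ℕ} (hn : n ≠ 0) (c : Fin (k + 1)) :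
    slotEval c (X a ^ n) = if a = c then PowerSeries.X ^ n else 0 := by
  rw [map_pow, slotEval, aeval_X, slotGen, if_neg ha]
  split_ifs <;> simp [hn]

lemma slotEval_zero_X_zero_pow (n : ℕ) :
    slotEval (0 : Fin (k + 1)) (X 0 ^ n) = PowerSeries.X ^ n := by
  simp [slotEval, slotGen]

lemma coeff_slotEval_X_zero_pow_self {c : Fin (k + 1)} (hc : c ≠ 0) (n : ℕ) :
    coeff n (slotEval c (X 0 ^ n)) = (-1) ^ n := by
  simp [slotEval, slotGen, hc, mul_pow, PowerSeries.coeff_X_pow_mul']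

lemma constantCoeff_slotEval (c : Fin (k + 1)) (p : MvPolynomial (Fin (k + 1)) ℤ) :
    constantCoeff (slotEval c p) = MvPolynomial.constantCoeff p := by
  have : constantCoeff.comp (slotEval c).toRingHom = MvPolynomial.constantCoeff :=
    MvPolynomial.ringHom_ext (by simp) fun a => by
      simpa [slotEval] using PowerSeries.X_dvd_iff.1 (X_dvd_slotGen c a)
  exact RingHom.congr_fun this p

variable (m)

/-- Up to scale, the only weights that cancel the `X^m`-coefficients of relations (iii) and (iv). -/
def slotWeight (c : Fin (k + 1)) : ℤ := if c = 0 then -(-1) ^ m else 1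

def topCoeff : MvPolynomial (Fin (k + 1)) ℤ →ₗ[ℤ] ℤ :=
  ∑ c, slotWeight m c • (coeff m ∘ₗ (slotEval c).toLinearMap)

variable {m}

lemma topCoeff_apply (x : MvPolynomial (Fin (k + 1)) ℤ) :
    topCoeff m x = ∑ c, slotWeight m c * coeff m (slotEval c x) := by
  simp [topCoeff]

lemma topCoeff_X_pow {a : Fin (k + 1)} (ha : a ≠ 0) {n : ℕ} (hn : n ≠ 0) :
    topCoeff m (X a ^ n) = if n = m then 1 else 0 := by
  simp only [topCoeff_apply, slotEval_X_pow ha hn, apply_ite (coeff m), map_zero,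
    PowerSeries.coeff_X_pow, mul_ite, mul_zero, Finset.sum_ite_eq, Finset.mem_univ, if_true,
    slotWeight, if_neg ha, one_mul, eq_comm]

lemma topCoeff_X_zero_pow_self :
    topCoeff m (X (0 : Fin (k + 1)) ^ m) = (-1) ^ m * ((k : ℤ) - 1) := by
  rw [topCoeff_apply, Fin.sum_univ_succ, slotEval_zero_X_zero_pow, PowerSeries.coeff_X_pow_self]
  simp only [slotWeight, if_true, Fin.succ_ne_zero, if_false, one_mul,
    coeff_slotEval_X_zero_pow_self (Fin.succ_ne_zero _), Finset.sum_const, Finset.card_univ,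
    Fintype.card_fin, nsmul_eq_mul]
  ring

variable (m k)

def modelIdeal : Ideal (MvPolynomial (Fin (k + 1)) ℤ) where
  carrier := {x | (∀ c, PowerSeries.X ^ m ∣ slotEval c x) ∧ topCoeff m x = 0}
  add_mem' hx hy := ⟨fun c => by rw [map_add]; exact dvd_add (hx.1 c) (hy.1 c),
    by rw [map_add, hx.2, hy.2, add_zero]⟩
  zero_mem' := ⟨fun c => by rw [map_zero]; exact dvd_zero _, map_zero _⟩
  smul_mem' p x hx := by
    refine ⟨fun c => ?_, ?_⟩
    · rw [smul_eq_mul, map_mul]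
      exact dvd_mul_of_dvd_right (hx.1 c) _
    · simp only [smul_eq_mul, topCoeff_apply, map_mul,
        PowerSeries.coeff_mul_of_X_pow_dvd (hx.1 _), constantCoeff_slotEval,
        mul_left_comm _ (MvPolynomial.constantCoeff p), ← Finset.mul_sum]
      rw [← topCoeff_apply, hx.2, mul_zero]

variable {m k}

lemma mem_modelIdeal_of_X_pow_succ_dvd {x : MvPolynomial (Fin (k + 1)) ℤ}
    (hx : ∀ c, PowerSeries.X ^ (m + 1) ∣ slotEval c x) : x ∈ modelIdeal m k := by
  refine ⟨fun c => (pow_dvd_pow _ m.le_succ).trans (hx c), ?_⟩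
  rw [topCoeff_apply]
  refine Finset.sum_eq_zero fun c _ => ?_
  rw [PowerSeries.X_pow_dvd_iff.1 (hx c) m m.lt_succ_self, mul_zero]

lemma relations_subset_modelIdeal (hm : m ≠ 0) (hk : 1 ≤ k) :
    relations m k ⊆ modelIdeal m k := by
  have h10 := one_ne_zero_of_one_le hk
  intro g hg
  simp only [relations, Set.mem_union, Set.mem_ofPred_eq, Set.mem_singleton_iff] at hg
  rcases hg with
    (((((⟨i, j, hi, hij, rfl⟩ | ⟨i, hi, rfl⟩) | ⟨i, hi, rfl⟩) | rfl) | rfl) | rfl)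
  · have hi0 := one_le_val_iff.1 hi
    have hj0 : j ≠ 0 := one_le_val_iff.1 (by omega)
    have hne : i ≠ j := Fin.ne_of_lt hij
    refine mem_modelIdeal_of_X_pow_succ_dvd fun c => ?_
    rw [← pow_one (X i), ← pow_one (X j), map_mul, slotEval_X_pow hi0 one_ne_zero,
      slotEval_X_pow hj0 one_ne_zero]
    split_ifs with hic hjc
    · exact absurd (hic.trans hjc.symm) hne
    all_goals simp
  · have hi0 := one_le_val_iff.1 hi
    refine mem_modelIdeal_of_X_pow_succ_dvd fun c => ?_
    suffices slotEval c (X i * X 0 + X i ^ 2 * X 0 + X i ^ 2) = 0 by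
      rw [this]; exact dvd_zero _
    by_cases hic : i = c
    · subst hic
      have hinv := PowerSeries.invUnitsSub_mul_sub (-1 : ℤˣ)
      simp only [Units.val_neg, Units.val_one, map_neg, map_one] at hinv
      simp only [map_add, map_mul, map_pow, slotEval, aeval_X, slotGen, if_neg hi0, if_true]
      linear_combination (-PowerSeries.X ^ 2 : PowerSeries ℤ) * hinv
    · simp [slotEval, slotGen, hi0, hic]
  · have hi0 : i ≠ 0 := one_le_val_iff.1 (by omega)
    refine ⟨fun c => ?_, ?_⟩
    · rw [map_sub]
      exact dvd_sub (X_pow_dvd_slotEval_X_pow c i m) (X_pow_dvd_slotEval_X_pow c 1 m)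
    · rw [map_sub, topCoeff_X_pow hi0 hm, topCoeff_X_pow h10 hm, sub_self]
  · refine ⟨fun c => ?_, ?_⟩
    · rw [C_mul', map_sub, map_zsmul, zsmul_eq_mul]
      exact dvd_sub (X_pow_dvd_slotEval_X_pow c 0 m)
        (dvd_mul_of_dvd_right (X_pow_dvd_slotEval_X_pow c 1 m) _)
    · rw [C_mul', map_sub, map_zsmul, topCoeff_X_pow h10 hm, topCoeff_X_zero_pow_self, if_pos rfl,
        smul_eq_mul, mul_one, sub_self]
  · exact mem_modelIdeal_of_X_pow_succ_dvd fun c => X_pow_dvd_slotEval_X_pow c 0 (m + 1)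
  · exact mem_modelIdeal_of_X_pow_succ_dvd fun c => X_pow_dvd_slotEval_X_pow c 1 (m + 1)

end Model

section Independence

variable {m k}

open PowerSeries (coeff)

def modelCoord (p : BasisIndex m k) : MvPolynomial (Fin (k + 1)) ℤ →ₗ[ℤ] ℤ :=
  if p.1.2 < m then coeff p.1.2 ∘ₗ (slotEval p.1.1).toLinearMap else topCoeff m

lemma modelCoord_eq_zero {x : MvPolynomial (Fin (k + 1)) ℤ} (hx : x ∈ modelIdeal m k)
    (p : BasisIndex m k) : modelCoord p x = 0 := by
  unfold modelCoord
  split_ifs with hp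
  · exact PowerSeries.X_pow_dvd_iff.1 (hx.1 _) _ hp
  · exact hx.2

lemma modelCoord_X_pow (hm : m ≠ 0) (hk : 1 ≤ k) {p q : BasisIndex m k}
    (hpq : p.1.1 = 0 ∨ q.1.1 ≠ 0) :
    modelCoord p (X q.1.1 ^ q.1.2) = if p = q then 1 else 0 := by
  simp only [Subtype.ext_iff, Prod.ext_iff]
  by_cases hp : p.1.2 < m
  · rw [modelCoord, if_pos hp, LinearMap.comp_apply, AlgHom.toLinearMap_apply]
    rcases eq_or_ne q.1.1 0 with hq | hq
    · rw [hq, hpq.resolve_right (not_not.2 hq), slotEval_zero_X_zero_pow, PowerSeries.coeff_X_pow]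
      simp
    · rw [slotEval_X_pow hq (q.snd_ne_zero hq), apply_ite (coeff p.1.2), PowerSeries.coeff_X_pow,
        map_zero]
      rcases eq_or_ne q.1.1 p.1.1 with hqp | hqp
      · simp [hqp]
      · simp [hqp, hqp.symm]
  · obtain ⟨hp1, hpm⟩ := p.eq_top_of_le hm hk (not_lt.1 hp)
    have hq : q.1.1 ≠ 0 := hpq.resolve_left (by rw [hp1]; exact one_ne_zero_of_one_le hk)
    rw [modelCoord, if_neg hp, topCoeff_X_pow hq (q.snd_ne_zero hq), hp1, hpm]
    by_cases hqm : q.1.2 = m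
    · simp [hqm, (q.eq_top_of_le hm hk hqm.ge).1]
    · simp [hqm, Ne.symm hqm]

lemma linearIndependent_monomialFamily (hm : m ≠ 0) (hk : 1 ≤ k) :
    LinearIndependent ℤ (monomialFamily m k) := by
  rw [linearIndependent_iff']
  intro s g hs
  have hmem :
      ∑ q ∈ s, g q • (X q.1.1 ^ q.1.2 : MvPolynomial (Fin (k + 1)) ℤ) ∈ modelIdeal m k := by
    refine Ideal.span_le.2 (relations_subset_modelIdeal hm hk) (Ideal.Quotient.eq_zero_iff_mem.1 ?_)
    simpa [map_sum, monomialFamily, gen] using hs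
  have hcoord (p : BasisIndex m k) : ∑ q ∈ s, g q * modelCoord p (X q.1.1 ^ q.1.2) = 0 := by
    simpa only [map_sum, LinearMap.map_smul, smul_eq_mul] using modelCoord_eq_zero hmem p
  have hsingle {p : BasisIndex m k} (hp : p ∈ s)
      (hoff : ∀ q ∈ s, q ≠ p → g q * modelCoord p (X q.1.1 ^ q.1.2) = 0) : g p = 0 := by
    rw [← hcoord p, Finset.sum_eq_single p hoff (absurd hp),
      modelCoord_X_pow hm hk (eq_or_ne _ 0), if_pos rfl, mul_one]
  have hzero : ∀ p ∈ s, p.1.1 = 0 → g p = 0 := fun p hp hp0 =>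
    hsingle hp fun q _ hqp => by rw [modelCoord_X_pow hm hk (Or.inl hp0), if_neg hqp.symm, mul_zero]
  intro p hp
  refine hsingle hp fun q hq hqp => ?_
  rcases eq_or_ne q.1.1 0 with hq0 | hq0
  · rw [hzero q hq hq0, zero_mul]
  · rw [modelCoord_X_pow hm hk (Or.inr hq0), if_neg hqp.symm, mul_zero]

end Independence

end PolygonSpaceKTheory

end

/-- Proposition 2.5 / Theorem 2.7: the K-theory ring `K(N_{n,k})` of the polygon
space with genetic code `{{n,k}}`, where `m = n-3`.  Variables: `X 0 = β`,
`X i = αᵢ` for `1 ≤ i ≤ k`.  The quotient `B` of `ℤ[α₁,…,α_k,β]` by the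
relations `αᵢαⱼ = 0` (`i ≠ j`), `αᵢβ + αᵢ²β + αᵢ² = 0`, `αᵢ^m = α₁^m`,
`β^m = (-1)^m (k-1) α₁^m`, `β^{m+1} = 0 = α₁^{m+1}` is free abelian with basis
`{1} ∪ {α₁^j : 1 ≤ j ≤ m} ∪ {αᵢ^j : 2 ≤ i ≤ k, 1 ≤ j ≤ m-1} ∪ {β^j : 1 ≤ j ≤ m-1}`. -/
theorem stmt_13 (m k : ℕ) (hm : 2 ≤ m) (hk : 1 ≤ k)
    (I : Ideal (MvPolynomial (Fin (k + 1)) ℤ))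
    (hI : I = Ideal.span
      ({f | ∃ i j : Fin (k + 1), 1 ≤ (i : ℕ) ∧ (i : ℕ) < (j : ℕ) ∧ f = X i * X j} ∪
       {f | ∃ i : Fin (k + 1), 1 ≤ (i : ℕ) ∧
          f = X i * X 0 + X i ^ 2 * X 0 + X i ^ 2} ∪
       {f | ∃ i : Fin (k + 1), 2 ≤ (i : ℕ) ∧ f = X i ^ m - X 1 ^ m} ∪
       {X 0 ^ m - C ((-1) ^ m * ((k : ℤ) - 1)) * X 1 ^ m} ∪
       {X 0 ^ (m + 1)} ∪ {X 1 ^ (m + 1)})) :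
    ∃ b : Module.Basis
        {p : Fin (k + 1) × ℕ //
          (p.1 = 0 ∧ p.2 ≤ m - 1) ∨
          ((p.1 : ℕ) = 1 ∧ 1 ≤ p.2 ∧ p.2 ≤ m) ∨
          (2 ≤ (p.1 : ℕ) ∧ 1 ≤ p.2 ∧ p.2 ≤ m - 1)} ℤ
        (MvPolynomial (Fin (k + 1)) ℤ ⧸ I),
      ∀ p, b p = Ideal.Quotient.mk I (X p.1.1) ^ p.1.2 := by
  subst hI
  have hm : m ≠ 0 := by omega
  exact ⟨Module.Basis.mk (PolygonSpaceKTheory.linearIndependent_monomialFamily hm hk)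
    (PolygonSpaceKTheory.span_monomialFamily_eq_top hm hk).ge,
    fun p => Module.Basis.mk_apply _ _ _⟩
end

section
/- Let n ≥ 4 and set m = n−3. Let ℓ = (ℓ₁,…,ℓₙ) be a generic n-tuple of positive real numbers with ℓ₁ ≤ ⋯ ≤ ℓₙ, and let Δ be the set of subsets S ⊆ {1,…,n−1} such that Σ_{i∈S∪{n}} ℓᵢ < Σ_{i∉S∪{n}} ℓᵢ (the subgees). Assume ∅ ∈ Δ and that some singleton belongs to Δ; let k be the largest i with {i} ∈ Δ, and let s be the maximal size of an element of Δ (so every element of Δ is a subset of {1,…,k}, and s ≤ m). Let B be the quotient of ℤ[α₁,…,α_k, β] by the ideal generated by: (i) α_iβ + α_i²β + α_i² for 1 ≤ i ≤ k; (ii) Π_{i∈T} α_i for every subset T ⊆ {1,…,k} with T ∉ Δ; and (iii) all monomials of total degree m−s+1 in α₁,…,α_k, β. Then B is a free abelian group with basis {β^i · Π_{j∈S} α_j : S ∈ Δ, i ≥ 0, i + |S| ≤ m−s}. -/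
open MvPolynomial
open Fin.NatCast

/-!
In the quotient, `β ^ (m - s + 1) = 0`, so `1 + β` is a unit and relation (i) becomes
`αᵢ² = αᵢ u(β)` with `u = -β / (1 + β)` truncated. Hence multiplying a monomial
`β ^ c ∏_{j ∈ S} α_j` by a generator gives a combination of such monomials with `S` growing by
at most one element; relations (ii) and (iii) kill those with `S ∉ Δ` or of degree `> m - s`,
so the proposed basis spans.

For independence, every subgee `T` gives a ring map to `ℤ[t]` modulo `t ^ (m - s + 1)`
sending `β ↦ t`, `αᵢ ↦ u(t)` for `i ∈ T` and the other `αᵢ` to `0`; it kills the ideal because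
`Δ` is closed under subsets. It sends `β ^ c ∏_{j ∈ S} α_j` to `t ^ c u(t) ^ |S|` when `S ⊆ T` and
to `0` otherwise. Since `u(t) = -t · (unit)`, induction on `T` shows that all coefficients
of a vanishing combination are zero.
-/

open Finset

section GeomSum

variable {A : Type*} [CommRing A]

lemma one_add_mul_geom_sum_neg (x : A) (n : ℕ) :
    (1 + x) * ∑ j ∈ range n, (-x) ^ j = 1 - (-x) ^ n := by
  simpa using mul_neg_geom_sum (-x) n

lemma sq_eq_neg_mul_geom_sum {a x : A} {M : ℕ} (h : a * x + a ^ 2 * x + a ^ 2 = 0)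
    (hx : x ^ (M + 1) = 0) : a ^ 2 = -(a * x * ∑ j ∈ range (M + 1), (-x) ^ j) := by
  have hg := one_add_mul_geom_sum_neg x (M + 1)
  rw [neg_pow, hx, mul_zero, sub_zero] at hg
  linear_combination (∑ j ∈ range (M + 1), (-x) ^ j) * h - a ^ 2 * hg

end GeomSum

namespace Polynomial

variable {R : Type*} [CommRing R]

/-- `-X / (1 + X)` modulo `X ^ (M + 1)`: the nonzero solution `u` of `u X + u² X + u² = 0`. -/
noncomputable def negXDivOneAddX (M : ℕ) : R[X] := -(X * ∑ j ∈ range (M + 1), (-X) ^ j)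

lemma X_dvd_negXDivOneAddX (M : ℕ) : (X : R[X]) ∣ negXDivOneAddX M :=
  (dvd_mul_right _ _).neg_right

lemma X_pow_dvd_negXDivOneAddX_rel (M : ℕ) :
    (X : R[X]) ^ (M + 1) ∣
      negXDivOneAddX M * X + negXDivOneAddX M ^ 2 * X + negXDivOneAddX M ^ 2 := by
  refine ⟨(-1) ^ (M + 1) * negXDivOneAddX M * X, ?_⟩
  unfold negXDivOneAddX
  linear_combination (X * ∑ j ∈ range (M + 1), (-X : R[X]) ^ j) * X *
    one_add_mul_geom_sum_neg (X : R[X]) (M + 1)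

lemma isCoprime_X_geom_sum_neg (n : ℕ) : IsCoprime (X : R[X]) (∑ j ∈ range (n + 1), (-X) ^ j) :=
  ⟨-(-X) ^ n, 1 + X, by linear_combination one_add_mul_geom_sum_neg (X : R[X]) (n + 1)⟩

lemma coeff_eq_zero_of_X_pow_dvd_negXDivOneAddX_pow_mul {M t c : ℕ} {Q : R[X]}
    (h : X ^ (M + 1) ∣ negXDivOneAddX M ^ t * Q) (hct : c + t ≤ M) : Q.coeff c = 0 := by
  have hu : negXDivOneAddX M ^ t * Q =
      (∑ j ∈ range (M + 1), (-X : R[X]) ^ j) ^ t * ((-1) ^ t * (X ^ t * Q)) := by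
    unfold negXDivOneAddX; ring
  rw [hu] at h
  have h' := ((isCoprime_X_geom_sum_neg M).pow (m := M + 1) (n := t)).dvd_of_dvd_mul_left h
  rw [(isUnit_neg_one.pow t).dvd_mul_left, X_pow_dvd_iff] at h'
  simpa using h' (c + t) (by omega)

end Polynomial

namespace Subalgebra

variable {R A : Type*} [CommRing R] [CommRing A] [Algebra R A]

def mulStabilizer (W : Submodule R A) : Subalgebra R A where
  carrier := {a | ∀ w ∈ W, a * w ∈ W}
  mul_mem' ha hb w hw := by rw [mul_assoc]; exact ha _ (hb w hw)
  add_mem' ha hb w hw := by rw [add_mul]; exact W.add_mem (ha w hw) (hb w hw)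
  algebraMap_mem' r w hw := by rw [← Algebra.smul_def]; exact W.smul_mem r hw

lemma mem_mulStabilizer {W : Submodule R A} {a : A} :
    a ∈ mulStabilizer W ↔ ∀ w ∈ W, a * w ∈ W :=
  Iff.rfl

lemma mem_mulStabilizer_span {s : Set A} {a : A} (h : ∀ w ∈ s, a * w ∈ Submodule.span R s) :
    a ∈ mulStabilizer (Submodule.span R s) := by
  have : Submodule.span R s ≤ (Submodule.span R s).comap (LinearMap.mulLeft R a) :=
    Submodule.span_le.2 h
  exact fun w hw => this hw

lemma eq_top_of_one_mem_of_mulStabilizer_eq_top {W : Submodule R A} (h1 : (1 : A) ∈ W)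
    (h : mulStabilizer W = ⊤) : W = ⊤ :=
  eq_top_iff.2 fun a _ => by simpa using mem_mulStabilizer.1 (h ▸ Algebra.mem_top (x := a)) 1 h1

end Subalgebra

namespace PolygonKTheory

section Spanning

variable {R A σ : Type*} [CommRing R] [CommRing A] [Algebra R A]

/-- `x b` plays the role of `β` and the other `x i` that of the `αᵢ`. -/
structure SatisfiesRelations (x : σ → A) (b : σ) (Δ : Set (Finset σ)) (M : ℕ) : Prop where
  rel : ∀ i, i ≠ b → x i * x b + x i ^ 2 * x b + x i ^ 2 = 0
  prod_eq_zero : ∀ T : Finset σ, b ∉ T → T ∉ Δ → ∏ i ∈ T, x i = 0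
  pow_mul_prod_eq_zero : ∀ (S : Finset σ) (c : ℕ), c + S.card = M + 1 → x b ^ c * ∏ i ∈ S, x i = 0

variable (x : σ → A) (b : σ) (Δ : Set (Finset σ)) (M : ℕ)

def basisFamily : {p : Finset σ × ℕ // p.1 ∈ Δ ∧ p.2 + p.1.card ≤ M} → A :=
  fun p => x b ^ p.1.2 * ∏ i ∈ p.1.1, x i

variable {x b Δ M}

lemma SatisfiesRelations.pow_mul_prod_mem_span (hx : SatisfiesRelations x b Δ M)
    {S : Finset σ} {c : ℕ} (hbS : b ∉ S) (hc : c + S.card ≤ M + 1) :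
    x b ^ c * ∏ i ∈ S, x i ∈ Submodule.span R (Set.range (basisFamily x b Δ M)) := by
  by_cases hSΔ : S ∈ Δ
  · rcases Nat.lt_or_eq_of_le hc with hlt | heq
    · exact Submodule.subset_span ⟨⟨(S, c), hSΔ, by dsimp only; omega⟩, rfl⟩
    · rw [hx.pow_mul_prod_eq_zero S c heq]; exact Submodule.zero_mem _
  · rw [hx.prod_eq_zero S hbS hSΔ, mul_zero]; exact Submodule.zero_mem _

lemma SatisfiesRelations.base_mem_mulStabilizer (hx : SatisfiesRelations x b Δ M)
    (hΔb : ∀ S ∈ Δ, b ∉ S) :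
    x b ∈ Subalgebra.mulStabilizer (Submodule.span R (Set.range (basisFamily x b Δ M))) := by
  refine Subalgebra.mem_mulStabilizer_span ?_
  rintro _ ⟨⟨⟨S, c⟩, hSΔ, hc⟩, rfl⟩
  rw [basisFamily, ← mul_assoc, ← pow_succ']
  exact hx.pow_mul_prod_mem_span (hΔb S hSΔ) (by dsimp only at hc ⊢; omega)

lemma SatisfiesRelations.mem_mulStabilizer [DecidableEq σ] (hx : SatisfiesRelations x b Δ M)
    (hΔb : ∀ S ∈ Δ, b ∉ S) (i : σ) :
    x i ∈ Subalgebra.mulStabilizer (Submodule.span R (Set.range (basisFamily x b Δ M))) := by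
  have hb := hx.base_mem_mulStabilizer (R := R) hΔb
  rcases eq_or_ne i b with rfl | hib
  · exact hb
  refine Subalgebra.mem_mulStabilizer_span ?_
  rintro _ ⟨⟨⟨S, c⟩, hSΔ, hc⟩, rfl⟩
  dsimp only at hc ⊢
  by_cases hiS : i ∈ S
  · have hsq : x i * ∏ j ∈ S, x j =
        -(x b * ∑ j ∈ range (M + 1), (-x b) ^ j) * ∏ j ∈ S, x j := by
      rw [← mul_prod_erase S x hiS, ← mul_assoc, ← sq, sq_eq_neg_mul_geom_sum (hx.rel i hib)
        (by simpa using hx.pow_mul_prod_eq_zero ∅ (M + 1) (by simp))]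
      ring
    rw [basisFamily, mul_left_comm, hsq, mul_left_comm]
    refine (Subalgebra.mem_mulStabilizer.1 ?_) _ (Submodule.subset_span ⟨⟨(S, c), hSΔ, hc⟩, rfl⟩)
    exact neg_mem (mul_mem hb (sum_mem fun j _ => pow_mem (neg_mem hb) j))
  · rw [basisFamily, mul_left_comm, ← prod_insert hiS]
    dsimp only
    refine hx.pow_mul_prod_mem_span ?_ (by rw [card_insert_of_notMem hiS]; omega)
    exact mem_insert.not.2 (not_or.2 ⟨hib.symm, hΔb S hSΔ⟩)

theorem SatisfiesRelations.span_basisFamily_eq_top [DecidableEq σ]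
    (hx : SatisfiesRelations x b Δ M) (hgen : Algebra.adjoin R (Set.range x) = ⊤)
    (hΔb : ∀ S ∈ Δ, b ∉ S) :
    Submodule.span R (Set.range (basisFamily x b Δ M)) = ⊤ := by
  refine Subalgebra.eq_top_of_one_mem_of_mulStabilizer_eq_top ?_ ?_
  · simpa using hx.pow_mul_prod_mem_span (R := R) (S := ∅) (c := 0) (notMem_empty b) (by simp)
  · rw [eq_top_iff, ← hgen]
    exact Algebra.adjoin_le (Set.range_subset_iff.2 (hx.mem_mulStabilizer hΔb))

end Spanning

section Quotient

variable (R : Type*) {σ : Type*} [CommRing R]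

lemma adjoin_range_mk_X (I : Ideal (MvPolynomial σ R)) :
    Algebra.adjoin R (Set.range fun i => Ideal.Quotient.mk I (X i)) = ⊤ := by
  have : (Set.range fun i => Ideal.Quotient.mk I (X i)) =
      Ideal.Quotient.mkₐ R I '' Set.range X := by
    rw [← Set.range_comp]; rfl
  rw [this, ← AlgHom.map_adjoin, adjoin_range_X, Algebra.map_top, AlgHom.range_eq_top]
  exact Ideal.Quotient.mkₐ_surjective R I

section EvalAt

variable [DecidableEq σ] (b : σ) (M : ℕ)

noncomputable def evalAt (T : Finset σ) : MvPolynomial σ R →ₐ[R] Polynomial R :=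
  aeval fun i => if i = b then Polynomial.X else if i ∈ T then Polynomial.negXDivOneAddX M else 0

variable {R b M}

lemma X_dvd_evalAt_X (T : Finset σ) (i : σ) : Polynomial.X ∣ evalAt R b M T (X i) := by
  simp only [evalAt, aeval_X]
  split_ifs
  exacts [dvd_rfl, Polynomial.X_dvd_negXDivOneAddX M, dvd_zero _]

lemma evalAt_X_pow_mul_prod (T : Finset σ) {S : Finset σ} (hbS : b ∉ S) (c : ℕ) :
    evalAt R b M T (X b ^ c * ∏ i ∈ S, X i) =
      if S ⊆ T then Polynomial.X ^ c * Polynomial.negXDivOneAddX M ^ S.card else 0 := by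
  simp only [evalAt, map_mul, map_pow, map_prod, aeval_X, ↓reduceIte]
  split_ifs with hST
  · rw [prod_congr rfl fun i hi => by rw [if_neg (ne_of_mem_of_not_mem hi hbS), if_pos (hST hi)],
      prod_const]
  · obtain ⟨i, hiS, hiT⟩ := not_subset.1 hST
    rw [prod_eq_zero hiS (by rw [if_neg (ne_of_mem_of_not_mem hiS hbS), if_neg hiT]), mul_zero]

end EvalAt

variable [Fintype σ]

noncomputable def truncIdeal (b : σ) (Δ : Set (Finset σ)) (M : ℕ) : Ideal (MvPolynomial σ R) :=
  Ideal.span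
    ({f | ∃ i, i ≠ b ∧ f = X i * X b + X i ^ 2 * X b + X i ^ 2} ∪
     {f | ∃ T : Finset σ, b ∉ T ∧ T ∉ Δ ∧ f = ∏ i ∈ T, X i} ∪
     {f | ∃ d : σ → ℕ, ∑ i, d i = M + 1 ∧ f = ∏ i, X i ^ d i})

variable {R} {b : σ} {Δ : Set (Finset σ)} {M : ℕ}

lemma satisfiesRelations_mk [DecidableEq σ] :
    SatisfiesRelations (fun i => Ideal.Quotient.mk (truncIdeal R b Δ M) (X i)) b Δ M := by
  refine ⟨fun i hi => ?_, fun T hbT hT => ?_, fun S c h => ?_⟩ <;>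
    simp only [← map_pow, ← map_mul, ← map_add, ← map_prod, Ideal.Quotient.eq_zero_iff_mem]
  · exact Ideal.subset_span (Or.inl (Or.inl ⟨i, hi, rfl⟩))
  · exact Ideal.subset_span (Or.inl (Or.inr ⟨T, hbT, hT, rfl⟩))
  · refine Ideal.subset_span (Or.inr ⟨fun i => (if i = b then c else 0) + if i ∈ S then 1 else 0,
      by simpa [sum_add_distrib] using h, ?_⟩)
    simp only [pow_add, prod_mul_distrib, pow_ite, pow_zero, pow_one, prod_ite_eq', mem_univ,
      if_true, prod_ite_mem, univ_inter]

lemma X_pow_dvd_evalAt [DecidableEq σ] (hdown : ∀ S ∈ Δ, ∀ T ⊆ S, T ∈ Δ) {T : Finset σ}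
    (hT : T ∈ Δ) {f : MvPolynomial σ R} (hf : f ∈ truncIdeal R b Δ M) :
    Polynomial.X ^ (M + 1) ∣ evalAt R b M T f := by
  suffices h : truncIdeal R b Δ M ≤
      (Ideal.span {Polynomial.X ^ (M + 1)}).comap (evalAt R b M T) from
    Ideal.mem_span_singleton.1 (h hf)
  refine Ideal.span_le.2 ?_
  rintro _ ((⟨i, hi, rfl⟩ | ⟨T', hbT', hT', rfl⟩) | ⟨d, hd, rfl⟩) <;>
    simp only [SetLike.mem_coe, Ideal.mem_comap, Ideal.mem_span_singleton]
  · simp only [evalAt, map_add, map_mul, map_pow, aeval_X, if_neg hi, ↓reduceIte]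
    split_ifs
    exacts [Polynomial.X_pow_dvd_negXDivOneAddX_rel M, by simp]
  · obtain ⟨i, hiT', hiT⟩ := not_subset.1 fun h => hT' (hdown T hT T' h)
    rw [map_prod, prod_eq_zero hiT' (by simp [evalAt, hiT, ne_of_mem_of_not_mem hiT' hbT'])]
    exact dvd_zero _
  · rw [map_prod, ← hd, ← prod_pow_eq_pow_sum]
    exact prod_dvd_prod_of_dvd _ _ fun i _ => by
      rw [map_pow]; exact pow_dvd_pow_of_dvd (X_dvd_evalAt_X T i) _

theorem linearIndependent_basisFamily_mk [DecidableEq σ] (hdown : ∀ S ∈ Δ, ∀ T ⊆ S, T ∈ Δ)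
    (hΔb : ∀ S ∈ Δ, b ∉ S) :
    LinearIndependent R
      (basisFamily (fun i => Ideal.Quotient.mk (truncIdeal R b Δ M) (X i)) b Δ M) := by
  rw [linearIndependent_iff']
  intro s g hg
  have hmem : ∑ p ∈ s, g p • (X b ^ p.1.2 * ∏ i ∈ p.1.1, X i) ∈ truncIdeal R b Δ M := by
    rw [← Ideal.Quotient.eq_zero_iff_mem, ← hg]
    simp only [basisFamily, map_sum, Algebra.smul_def, map_mul, map_pow, map_prod,
      Ideal.Quotient.mk_algebraMap]
    exact sum_congr rfl fun p _ => (Algebra.smul_def _ _).symm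
  suffices h : ∀ T, ∀ p ∈ s, p.1.1 = T → g p = 0 from fun p hp => h _ p hp rfl
  intro T
  induction T using Finset.strongInduction with
  | H T ih =>
  intro p₀ hp₀ hp₀T
  have hTΔ : T ∈ Δ := hp₀T ▸ p₀.2.1
  -- by induction, only the terms with `p.1.1 = T` survive `evalAt T`
  have hsum : evalAt R b M T (∑ p ∈ s, g p • (X b ^ p.1.2 * ∏ i ∈ p.1.1, X i)) =
      Polynomial.negXDivOneAddX M ^ T.card *
        ∑ p ∈ s, if p.1.1 = T then g p • Polynomial.X ^ p.1.2 else 0 := by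
    rw [map_sum, mul_sum]
    refine sum_congr rfl fun p hp => ?_
    rw [map_smul, evalAt_X_pow_mul_prod T (hΔb _ p.2.1)]
    by_cases hpT : p.1.1 = T
    · rw [if_pos hpT.subset, if_pos hpT, hpT, mul_smul_comm, mul_comm]
    · by_cases hsub : p.1.1 ⊆ T
      · rw [ih _ (ssubset_of_subset_of_ne hsub hpT) p hp rfl, zero_smul, if_neg hpT, mul_zero]
      · rw [if_neg hsub, if_neg hpT, smul_zero, mul_zero]
  have hdvd := X_pow_dvd_evalAt hdown hTΔ hmem
  rw [hsum] at hdvd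
  have hcoeff := Polynomial.coeff_eq_zero_of_X_pow_dvd_negXDivOneAddX_pow_mul hdvd
    (c := p₀.1.2) (hp₀T ▸ p₀.2.2)
  rw [Polynomial.finsetSum_coeff, sum_eq_single p₀] at hcoeff
  · simpa [hp₀T] using hcoeff
  · intro p _ hp
    split_ifs with hpT
    · have hc : p₀.1.2 ≠ p.1.2 := fun hc =>
        hp (Subtype.ext (Prod.ext (hpT.trans hp₀T.symm) hc.symm))
      simp [Polynomial.coeff_X_pow, hc]
    · exact Polynomial.coeff_zero _
  · exact fun h => absurd hp₀ h

variable (R b Δ M) in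
noncomputable def basis [DecidableEq σ] (hdown : ∀ S ∈ Δ, ∀ T ⊆ S, T ∈ Δ)
    (hΔb : ∀ S ∈ Δ, b ∉ S) :
    Module.Basis {p : Finset σ × ℕ // p.1 ∈ Δ ∧ p.2 + p.1.card ≤ M} R
      (MvPolynomial σ R ⧸ truncIdeal R b Δ M) :=
  .mk (linearIndependent_basisFamily_mk hdown hΔb)
    (satisfiesRelations_mk.span_basisFamily_eq_top (adjoin_range_mk_X R _) hΔb).ge

lemma basis_apply [DecidableEq σ] (hdown : ∀ S ∈ Δ, ∀ T ⊆ S, T ∈ Δ) (hΔb : ∀ S ∈ Δ, b ∉ S)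
    (p : {p : Finset σ × ℕ // p.1 ∈ Δ ∧ p.2 + p.1.card ≤ M}) :
    basis R b Δ M hdown hΔb p = Ideal.Quotient.mk (truncIdeal R b Δ M) (X b) ^ p.1.2 *
      ∏ i ∈ p.1.1, Ideal.Quotient.mk (truncIdeal R b Δ M) (X i) :=
  Module.Basis.mk_apply _ _ _

end Quotient

lemma subgee_of_subset {n : ℕ} {ℓ : ℕ → ℝ} (hpos : ∀ i, 1 ≤ i → i ≤ n → 0 < ℓ i)
    {S T : Finset ℕ} (hS : S ⊆ Icc 1 (n - 1)) (hTS : T ⊆ S)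
    (h : ∑ i ∈ insert n S, ℓ i < ∑ i ∈ Icc 1 n \ insert n S, ℓ i) :
    ∑ i ∈ insert n T, ℓ i < ∑ i ∈ Icc 1 n \ insert n T, ℓ i := by
  have hnonneg : ∀ i ∈ Icc 1 n, 0 ≤ ℓ i := fun i hi =>
    (hpos i (mem_Icc.1 hi).1 (mem_Icc.1 hi).2).le
  calc ∑ i ∈ insert n T, ℓ i ≤ ∑ i ∈ insert n S, ℓ i := by
        refine sum_le_sum_of_subset_of_nonneg (insert_subset_insert n hTS) fun i hi hiT => ?_
        have hiS : i ∈ S := (mem_insert.1 hi).resolve_left fun h => hiT (h ▸ mem_insert_self _ _)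
        exact hnonneg i (Icc_subset_Icc_right (Nat.sub_le n 1) (hS hiS))
    _ < ∑ i ∈ Icc 1 n \ insert n S, ℓ i := h
    _ ≤ ∑ i ∈ Icc 1 n \ insert n T, ℓ i :=
        sum_le_sum_of_subset_of_nonneg (sdiff_subset_sdiff subset_rfl (insert_subset_insert n hTS))
          fun i hi _ => hnonneg i (mem_sdiff.1 hi).1

section FinReindex

variable {k : ℕ}

lemma subset_Icc_iff_exists_map_valEmbedding {T : Finset ℕ} :
    T ⊆ Icc 1 k ↔ ∃ T' : Finset (Fin (k + 1)), 0 ∉ T' ∧ T'.map Fin.valEmbedding = T := by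
  constructor
  · intro hT
    have hval : ∀ i ∈ T, ((i : Fin (k + 1)) : ℕ) = i := fun i hi =>
      Fin.val_cast_of_lt (Nat.lt_succ_of_le (mem_Icc.1 (hT hi)).2)
    refine ⟨T.image (↑), fun h0 => ?_, ?_⟩
    · obtain ⟨i, hi, hi0⟩ := mem_image.1 h0
      have := hval i hi
      rw [hi0, Fin.val_zero] at this
      exact absurd (hT hi) (by simp [← this])
    · ext i
      simp only [mem_map, mem_image, Fin.valEmbedding_apply]
      constructor
      · rintro ⟨_, ⟨j, hj, rfl⟩, rfl⟩
        rwa [hval j hj]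
      · exact fun hi => ⟨i, ⟨i, hi, rfl⟩, hval i hi⟩
  · rintro ⟨T', h0, rfl⟩ i hi
    obtain ⟨j, hj, rfl⟩ := mem_map.1 hi
    have : (j : ℕ) ≠ 0 := fun h => h0 (Fin.val_eq_zero_iff.1 h ▸ hj)
    simp only [Fin.valEmbedding_apply, mem_Icc]
    omega

lemma prod_map_valEmbedding {M : Type*} [CommMonoid M] (f : Fin (k + 1) → M)
    (T : Finset (Fin (k + 1))) :
    ∏ i ∈ T.map Fin.valEmbedding, f (i : Fin (k + 1)) = ∏ i ∈ T, f i := by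
  simp

variable (R : Type*) [CommRing R]

lemma span_eq_truncIdeal_map_valEmbedding (Δ : Set (Finset ℕ)) (M : ℕ) :
    Ideal.span
      ({f | ∃ i : Fin (k + 1), 1 ≤ (i : ℕ) ∧ f = X i * X 0 + X i ^ 2 * X 0 + X i ^ 2} ∪
       {f | ∃ T : Finset ℕ, T ⊆ Icc 1 k ∧ T ∉ Δ ∧ f = ∏ i ∈ T, X (i : Fin (k + 1))} ∪
       {f | ∃ d : Fin (k + 1) → ℕ, ∑ i, d i = M + 1 ∧ f = ∏ i, X i ^ d i}) =
      truncIdeal R 0 {T | T.map Fin.valEmbedding ∈ Δ} M := by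
  unfold truncIdeal
  congr 3
  · ext f
    simp only [Set.mem_ofPred_eq, Nat.one_le_iff_ne_zero, Fin.val_ne_zero_iff]
  · ext f
    constructor
    · rintro ⟨T, hT, hTΔ, rfl⟩
      obtain ⟨T', h0, rfl⟩ := subset_Icc_iff_exists_map_valEmbedding.1 hT
      exact ⟨T', h0, hTΔ, prod_map_valEmbedding _ _⟩
    · rintro ⟨T', h0, hT', rfl⟩
      exact ⟨_, subset_Icc_iff_exists_map_valEmbedding.2 ⟨T', h0, rfl⟩, hT',
        (prod_map_valEmbedding _ _).symm⟩

variable {Δ : Set (Finset ℕ)} {M : ℕ}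

noncomputable def indexEquiv (hΔ : ∀ S ∈ Δ, S ⊆ Icc 1 k) :
    {p : Finset (Fin (k + 1)) × ℕ //
        p.1 ∈ {T | T.map Fin.valEmbedding ∈ Δ} ∧ p.2 + p.1.card ≤ M} ≃
      {p : Finset ℕ × ℕ // p.1 ∈ Δ ∧ p.2 + p.1.card ≤ M} :=
  Equiv.ofBijective (fun p => ⟨(p.1.1.map Fin.valEmbedding, p.1.2), p.2.1, by simpa using p.2.2⟩)
    ⟨fun p q h => by
      simp only [Subtype.mk.injEq, Prod.mk.injEq, map_inj] at h
      exact Subtype.ext (Prod.ext h.1 h.2),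
    fun ⟨⟨T, c⟩, hT, hc⟩ => by
      obtain ⟨T', -, rfl⟩ := subset_Icc_iff_exists_map_valEmbedding.1 (hΔ T hT)
      exact ⟨⟨(T', c), hT, by simpa using hc⟩, rfl⟩⟩

lemma map_valEmbedding_indexEquiv_symm (hΔ : ∀ S ∈ Δ, S ⊆ Icc 1 k)
    (p : {p : Finset ℕ × ℕ // p.1 ∈ Δ ∧ p.2 + p.1.card ≤ M}) :
    ((indexEquiv hΔ).symm p).1.1.map Fin.valEmbedding = p.1.1 ∧
      ((indexEquiv hΔ).symm p).1.2 = p.1.2 := by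
  have h := congrArg (fun q => q.1) ((indexEquiv hΔ).apply_symm_apply p)
  exact Prod.ext_iff.1 h

end FinReindex

end PolygonKTheory

open PolygonKTheory

theorem stmt_16_general (n m k s : ℕ)
    (ℓ : ℕ → ℝ)
    (hpos : ∀ i, 1 ≤ i → i ≤ n → 0 < ℓ i)
    (Δ : Set (Finset ℕ))
    (hΔ : Δ = {S | S ⊆ Finset.Icc 1 (n - 1) ∧
        ∑ i ∈ insert n S, ℓ i < ∑ i ∈ Finset.Icc 1 n \ insert n S, ℓ i})
    (hk2 : ∀ i, ({i} : Finset ℕ) ∈ Δ → i ≤ k)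
    (I : Ideal (MvPolynomial (Fin (k + 1)) ℤ))
    (hI : I = Ideal.span
      ({f | ∃ i : Fin (k + 1), 1 ≤ (i : ℕ) ∧
          f = X i * X 0 + X i ^ 2 * X 0 + X i ^ 2} ∪
       {f | ∃ T : Finset ℕ, T ⊆ Finset.Icc 1 k ∧ T ∉ Δ ∧
          f = ∏ i ∈ T, X (i : Fin (k + 1))} ∪
       {f | ∃ d : Fin (k + 1) → ℕ, (∑ i, d i) = m - s + 1 ∧ f = ∏ i, X i ^ d i})) :
    ∃ b : Module.Basis {p : Finset ℕ × ℕ // p.1 ∈ Δ ∧ p.2 + p.1.card ≤ m - s} ℤ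
        (MvPolynomial (Fin (k + 1)) ℤ ⧸ I),
      ∀ p, b p = Ideal.Quotient.mk I (X 0) ^ p.1.2 *
        ∏ i ∈ p.1.1, Ideal.Quotient.mk I (X (i : Fin (k + 1))) := by
  have hdown : ∀ S ∈ Δ, ∀ T ⊆ S, T ∈ Δ := by
    subst hΔ
    exact fun S hS T hTS => ⟨hTS.trans hS.1, subgee_of_subset hpos hS.1 hTS hS.2⟩
  have hΔIcc : ∀ S ∈ Δ, S ⊆ Icc 1 k := fun S hS i hi => by
    have hS' := hΔ ▸ hS
    exact mem_Icc.2 ⟨(mem_Icc.1 (hS'.1 hi)).1,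
      hk2 i (hdown S hS {i} (singleton_subset_iff.2 hi))⟩
  set Δ' : Set (Finset (Fin (k + 1))) := {T | T.map Fin.valEmbedding ∈ Δ}
  have hdown' : ∀ S ∈ Δ', ∀ T ⊆ S, T ∈ Δ' :=
    fun S hS T hTS => hdown _ hS _ (map_subset_map.2 hTS)
  have hzero : ∀ S ∈ Δ', 0 ∉ S :=
    fun S hS h0 => by simpa using hΔIcc _ hS (mem_map_of_mem Fin.valEmbedding h0)
  rw [span_eq_truncIdeal_map_valEmbedding] at hI
  subst hI
  refine ⟨(basis ℤ 0 _ _ hdown' hzero).reindex (indexEquiv hΔIcc), fun p => ?_⟩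
  obtain ⟨hS, hc⟩ := map_valEmbedding_indexEquiv_symm hΔIcc p
  rw [Module.Basis.reindex_apply, basis_apply, ← hS, hc,
    prod_map_valEmbedding fun i => Ideal.Quotient.mk _ (X i)]

/-- Theorem 3.1: for a generic sorted length vector `ℓ` with subgee set `Δ`,
largest singleton subgee `{k}` and maximal subgee size `s`, the quotient of
`K(N(ℓ)) = ℤ[α₁,…,α_k,β]/(αᵢβ + αᵢ²β + αᵢ², ∏_{i∈T}αᵢ for T not a subgee)`
by all `(m-s+1)`-fold products of the generators is free abelian with basis
`{β^i ∏_{j∈S} α_j : S ∈ Δ, i + |S| ≤ m - s}`, where `m = n-3`.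
Variables: `X 0 = β`, `X i = αᵢ` for `1 ≤ i ≤ k`. -/
theorem stmt_16 (n m k s : ℕ) (hn : 4 ≤ n) (hm : m = n - 3)
    (ℓ : ℕ → ℝ)
    (hpos : ∀ i, 1 ≤ i → i ≤ n → 0 < ℓ i)
    (hmono : ∀ i j, 1 ≤ i → i ≤ j → j ≤ n → ℓ i ≤ ℓ j)
    (hgen : ∀ S ⊆ Finset.Icc 1 n, ∑ i ∈ S, ℓ i ≠ ∑ i ∈ Finset.Icc 1 n \ S, ℓ i)
    (Δ : Set (Finset ℕ))
    (hΔ : Δ = {S | S ⊆ Finset.Icc 1 (n - 1) ∧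
        ∑ i ∈ insert n S, ℓ i < ∑ i ∈ Finset.Icc 1 n \ insert n S, ℓ i})
    (hempty : ∅ ∈ Δ)
    (hk1 : {k} ∈ Δ) (hk2 : ∀ i, ({i} : Finset ℕ) ∈ Δ → i ≤ k)
    (hs1 : ∃ S ∈ Δ, S.card = s) (hs2 : ∀ S ∈ Δ, S.card ≤ s)
    (I : Ideal (MvPolynomial (Fin (k + 1)) ℤ))
    (hI : I = Ideal.span
      ({f | ∃ i : Fin (k + 1), 1 ≤ (i : ℕ) ∧
          f = X i * X 0 + X i ^ 2 * X 0 + X i ^ 2} ∪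
       {f | ∃ T : Finset ℕ, T ⊆ Finset.Icc 1 k ∧ T ∉ Δ ∧
          f = ∏ i ∈ T, X (i : Fin (k + 1))} ∪
       {f | ∃ d : Fin (k + 1) → ℕ, (∑ i, d i) = m - s + 1 ∧ f = ∏ i, X i ^ d i})) :
    ∃ b : Module.Basis {p : Finset ℕ × ℕ // p.1 ∈ Δ ∧ p.2 + p.1.card ≤ m - s} ℤ
        (MvPolynomial (Fin (k + 1)) ℤ ⧸ I),
      ∀ p, b p = Ideal.Quotient.mk I (X 0) ^ p.1.2 *
        ∏ i ∈ p.1.1, Ideal.Quotient.mk I (X (i : Fin (k + 1))) :=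
  stmt_16_general n m k s ℓ hpos Δ hΔ hk2 I hI
end

section
/- For every integer m ≥ 1, Σ_{j=0}^{⌊(m−1)/2⌋} C(2m−2−2j, m−1−2j) ≡ C(2m, m−1) (mod 2); in particular, if m is even then Σ_{j=0}^{⌊(m−1)/2⌋} C(2m−2−2j, m−1−2j) is even. (The left side is the coefficient of x^{m−1} in the power series (1−x²)^{−1}(1−x)^{−m}.) -/
/-!
Applying Pascal's rule twice gives `C(n+2, k+2) = C(n, k+2) + 2 C(n, k+1) + C(n, k)`, i.e.
`C(n+2, k+2) ≡ C(n, k+2) + C(n, k) (mod 2)` — the coefficientwise form of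
`(1 - x²)⁻¹ (1 - x)⁻ⁿ ≡ (1 + x)⁻⁽ⁿ⁺²⁾ (mod 2)`. Peeling off the `j = 0` term then gives
`∑_j C(a + k - 2j, k - 2j) ≡ C(a + k + 2, k)` by induction on `k` in steps of two.
For the evenness, `C(2m, m+1) (m+1) = C(2m, m) m`, and `m + 1` is odd when `m` is even.
-/

namespace Nat

theorem choose_add_two_add_two (n k : ℕ) :
    (n + 2).choose (k + 2) = n.choose (k + 2) + 2 * n.choose (k + 1) + n.choose k := by
  rw [choose_succ_succ (n + 1), choose_succ_succ n k, choose_succ_succ n (k + 1)]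
  ring

theorem choose_add_two_add_two_modEq_two (n k : ℕ) :
    (n + 2).choose (k + 2) ≡ n.choose (k + 2) + n.choose k [MOD 2] := by
  rw [choose_add_two_add_two, Nat.ModEq]
  omega

theorem sum_choose_sub_two_mul_modEq_two : ∀ k a : ℕ,
    ∑ j ∈ Finset.range (k / 2 + 1), (a + (k - 2 * j)).choose (k - 2 * j)
      ≡ (a + k + 2).choose k [MOD 2]
  | 0, a => by simp [Nat.ModEq]
  | 1, a => by norm_num [Nat.ModEq, Nat.add_mod]
  | k + 2, a => by
      rw [show (k + 2) / 2 + 1 = k / 2 + 1 + 1 by omega, Finset.sum_range_succ']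
      have hshift : ∀ j, k + 2 - 2 * (j + 1) = k - 2 * j := fun j => by omega
      simp only [hshift, Nat.sub_zero, mul_zero]
      calc _ ≡ (a + k + 2).choose k + (a + (k + 2)).choose (k + 2) [MOD 2] :=
            (sum_choose_sub_two_mul_modEq_two k a).add_right _
        _ ≡ (a + (k + 2) + 2).choose (k + 2) [MOD 2] := by
            rw [add_comm, ← add_assoc]
            exact (choose_add_two_add_two_modEq_two _ k).symm

theorem even_choose_two_mul_succ {m : ℕ} (hm : Even m) : Even ((2 * m).choose (m + 1)) := by
  have hpascal := choose_succ_right_eq (2 * m) m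
  rw [show 2 * m - m = m by omega] at hpascal
  have hprod : Even ((2 * m).choose (m + 1) * (m + 1)) := hpascal ▸ hm.mul_left _
  exact (even_mul.1 hprod).resolve_right (by simpa [Nat.even_add_one] using hm)

end Nat

/-- The congruence from Section 5: the coefficient of `x^(m-1)` in
`(1-x²)⁻¹(1-x)⁻ᵐ`, namely `∑_j C(2m-2-2j, m-1-2j)`, is congruent mod 2 to
`C(2m, m-1)`; in particular it is even when `m` is even. -/
theorem stmt_18 (m : ℕ) (hm : 1 ≤ m) :
    (∑ j ∈ Finset.range ((m - 1) / 2 + 1),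
        (2 * m - 2 - 2 * j).choose (m - 1 - 2 * j)) ≡ (2 * m).choose (m - 1) [MOD 2] ∧
      (Even m →
        Even (∑ j ∈ Finset.range ((m - 1) / 2 + 1),
          (2 * m - 2 - 2 * j).choose (m - 1 - 2 * j))) := by
  have hcong := Nat.sum_choose_sub_two_mul_modEq_two (m - 1) (m - 1)
  rw [show m - 1 + (m - 1) + 2 = 2 * m by omega] at hcong
  have hsum : ∑ j ∈ Finset.range ((m - 1) / 2 + 1), (2 * m - 2 - 2 * j).choose (m - 1 - 2 * j)
      = ∑ j ∈ Finset.range ((m - 1) / 2 + 1), (m - 1 + (m - 1 - 2 * j)).choose (m - 1 - 2 * j) :=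
    Finset.sum_congr rfl fun j hj => by
      rw [Finset.mem_range] at hj
      congr 1
      omega
  rw [hsum]
  refine ⟨hcong, fun hme => Nat.even_iff.2 (Eq.trans hcong (Nat.even_iff.1 ?_))⟩
  rw [Nat.choose_symm_of_eq_add (show 2 * m = m - 1 + (m + 1) by omega)]
  exact Nat.even_choose_two_mul_succ hme
end
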